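/- arXiv:1610.03196 — 16 statements merged into one kernel-verified Lean document; each statement's English description precedes it below -/
import Mathlib

section
/- Let A be an n×n symmetric real matrix, M an n×n symmetric real matrix, B an m×n real matrix and C an n×m real matrix with A·C = 0, M·C = Bᵀ, L := B·C invertible, and A + Bᵀ·L⁻¹·B invertible. Set V := (A + Bᵀ·L⁻¹·B)⁻¹·(I − Bᵀ·L⁻¹·Cᵀ). Then V·A = I − C·L⁻¹·B, V·Bᵀ = 0, A·V = I − Bᵀ·L⁻¹·Cᵀ, and B·V = 0. -/
/-!
Write `L = B * C` and `S = A + Bᵀ * L⁻¹ * B`. Since `A * C = 0`, `S * C = Bᵀ`; since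
`L = Cᵀ * M * C` is symmetric, transposing gives `Cᵀ * S = B`. Hence `S⁻¹ * Bᵀ = C`,
`B * S⁻¹ = Cᵀ`, and `V = S⁻¹ - C * L⁻¹ * Cᵀ`, from which the four identities follow by
multiplying out.
-/

open Matrix

namespace Matrix

variable {m n R : Type*} [Fintype n] [CommRing R]
  {A M : Matrix n n R} {B : Matrix m n R} {C : Matrix n m R}

theorem transpose_mul_eq_self_of_mul_eq_transpose (hM : Mᵀ = M) (hMC : M * C = Bᵀ) :
    (B * C)ᵀ = B * C :=
  calc (B * C)ᵀ = Cᵀ * (M * C) := by rw [transpose_mul, hMC]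
    _ = (M * C)ᵀ * C := by rw [transpose_mul, hM, Matrix.mul_assoc]
    _ = B * C := by rw [hMC, transpose_transpose]

theorem add_transpose_mul_inv_mul_mul_eq [Fintype m] [DecidableEq m] (hAC : A * C = 0)
    (hL : IsUnit (B * C)) : (A + Bᵀ * (B * C)⁻¹ * B) * C = Bᵀ := by
  rw [Matrix.add_mul, hAC, zero_add, Matrix.mul_assoc, Matrix.mul_assoc,
    nonsing_inv_mul _ ((isUnit_iff_isUnit_det _).mp hL), Matrix.mul_one]

theorem transpose_mul_add_transpose_mul_inv_mul_eq [Fintype m] [DecidableEq m] (hA : Aᵀ = A)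
    (hAC : A * C = 0) (hL : IsUnit (B * C)) (hLsymm : (B * C)ᵀ = B * C) :
    Cᵀ * (A + Bᵀ * (B * C)⁻¹ * B) = B := by
  have h := congrArg transpose (add_transpose_mul_inv_mul_mul_eq hAC hL)
  rwa [transpose_mul, transpose_add, hA, transpose_mul, transpose_mul, transpose_transpose,
    transpose_nonsing_inv, hLsymm, ← Matrix.mul_assoc] at h

theorem nonsing_inv_mul_one_sub_mul_eq [Fintype m] [DecidableEq n] {S : Matrix n n R}
    (L : Matrix m m R) (hS : IsUnit S) (hSC : S * C = Bᵀ) :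
    S⁻¹ * (1 - Bᵀ * L * Cᵀ) = S⁻¹ - C * L * Cᵀ := by
  rw [Matrix.mul_sub, Matrix.mul_one, ← Matrix.mul_assoc, ← Matrix.mul_assoc, ← hSC,
    nonsing_inv_mul_cancel_left _ _ ((isUnit_iff_isUnit_det S).mp hS)]

end Matrix

theorem stmt1_general {n m : ℕ}
    (A M : Matrix (Fin n) (Fin n) ℝ) (B : Matrix (Fin m) (Fin n) ℝ)
    (C : Matrix (Fin n) (Fin m) ℝ)
    (hA : Aᵀ = A) (hM : Mᵀ = M)
    (hAC : A * C = 0) (hMC : M * C = Bᵀ)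
    (hL : IsUnit (B * C))
    (hInv : IsUnit (A + Bᵀ * (B * C)⁻¹ * B))
    (V : Matrix (Fin n) (Fin n) ℝ)
    (hV : V = (A + Bᵀ * (B * C)⁻¹ * B)⁻¹ * (1 - Bᵀ * (B * C)⁻¹ * Cᵀ)) :
    V * A = 1 - C * (B * C)⁻¹ * B ∧ V * Bᵀ = 0 ∧
      A * V = 1 - Bᵀ * (B * C)⁻¹ * Cᵀ ∧ B * V = 0 := by
  have hLsymm := transpose_mul_eq_self_of_mul_eq_transpose hM hMC
  have hSC := add_transpose_mul_inv_mul_mul_eq hAC hL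
  have hCS := transpose_mul_add_transpose_mul_inv_mul_eq hA hAC hL hLsymm
  set L := B * C
  set S := A + Bᵀ * L⁻¹ * B
  have hSdet := (isUnit_iff_isUnit_det S).mp hInv
  have hLdet := (isUnit_iff_isUnit_det L).mp hL
  have hSinvB : S⁻¹ * Bᵀ = C := by rw [← hSC, nonsing_inv_mul_cancel_left _ _ hSdet]
  have hBSinv : B * S⁻¹ = Cᵀ := by rw [← hCS, mul_nonsing_inv_cancel_right _ _ hSdet]
  have hCA : Cᵀ * A = 0 := by rw [← hA, ← transpose_mul, hAC, transpose_zero]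
  have hCB : Cᵀ * Bᵀ = L := by rw [← transpose_mul, hLsymm]
  have hAS : A = S - Bᵀ * L⁻¹ * B := (add_sub_cancel_right A _).symm
  rw [nonsing_inv_mul_one_sub_mul_eq _ hInv hSC] at hV
  refine ⟨?_, ?_, ?_, ?_⟩
  · rw [hV, Matrix.sub_mul, Matrix.mul_assoc, hCA, Matrix.mul_zero, sub_zero, hAS,
      Matrix.mul_sub, nonsing_inv_mul _ hSdet, ← Matrix.mul_assoc, ← Matrix.mul_assoc, hSinvB]
  · rw [hV, Matrix.sub_mul, hSinvB, Matrix.mul_assoc, hCB, nonsing_inv_mul_cancel_right _ _ hLdet,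
      sub_self]
  · rw [hV, Matrix.mul_sub, ← Matrix.mul_assoc, ← Matrix.mul_assoc, hAC, Matrix.zero_mul,
      Matrix.zero_mul, sub_zero, hAS, Matrix.sub_mul, mul_nonsing_inv _ hSdet,
      Matrix.mul_assoc, hBSinv]
  · rw [hV, Matrix.mul_sub, hBSinv, ← Matrix.mul_assoc, ← Matrix.mul_assoc,
      mul_nonsing_inv _ hLdet, Matrix.one_mul, sub_self]

theorem stmt1 {n m : ℕ} (hn : 0 < n) (hm : 0 < m)
    (A M : Matrix (Fin n) (Fin n) ℝ) (B : Matrix (Fin m) (Fin n) ℝ)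
    (C : Matrix (Fin n) (Fin m) ℝ)
    (hA : Aᵀ = A) (hM : Mᵀ = M)
    (hAC : A * C = 0) (hMC : M * C = Bᵀ)
    (hL : IsUnit (B * C))
    (hInv : IsUnit (A + Bᵀ * (B * C)⁻¹ * B))
    (V : Matrix (Fin n) (Fin n) ℝ)
    (hV : V = (A + Bᵀ * (B * C)⁻¹ * B)⁻¹ * (1 - Bᵀ * (B * C)⁻¹ * Cᵀ)) :
    V * A = 1 - C * (B * C)⁻¹ * B ∧ V * Bᵀ = 0 ∧
      A * V = 1 - Bᵀ * (B * C)⁻¹ * Cᵀ ∧ B * V = 0 :=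
  stmt1_general A M B C hA hM hAC hMC hL hInv V hV
end

section
/- Let A be an n×n symmetric real matrix, M an n×n symmetric real matrix, B an m×n real matrix and C an n×m real matrix with A·C = 0, M·C = Bᵀ, L := B·C invertible, and A + Bᵀ·L⁻¹·B invertible. Set V := (A + Bᵀ·L⁻¹·B)⁻¹·(I − Bᵀ·L⁻¹·Cᵀ). Then the (n+m)×(n+m) block matrix [[A, Bᵀ],[B, 0]] multiplied by the block matrix [[V, C·L⁻¹],[L⁻¹·Cᵀ, 0]] equals the identity; in particular [[A, Bᵀ],[B, 0]] is invertible with inverse [[V, C·L⁻¹],[L⁻¹·Cᵀ, 0]]. -/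
open Matrix

/-!
Put `L = B C` and `S = A + E L⁻¹ B`. The identities `D A = 0` and `D E = L` give `D S = B`, i.e.
`B S⁻¹ = D`. Hence `V = S⁻¹ (1 - E L⁻¹ D)` satisfies `B V = D - L L⁻¹ D = 0`, and then
`A V = S V - E L⁻¹ B V = 1 - E L⁻¹ D`, so `[[A, E], [B, 0]] * [[V, C L⁻¹], [L⁻¹ D, 0]] = 1`.
For `E = Bᵀ`, `D = Cᵀ`, the identity `D A = 0` is the transpose of `A C = 0`, and `D E = L`
holds because `B = Cᵀ M` with `M` symmetric makes both sides equal to `Cᵀ M C`.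
-/

namespace Matrix

variable {R : Type*} [CommRing R] {n m : Type*} [Fintype n] [Fintype m] [DecidableEq m]
  {A : Matrix n n R} {E : Matrix n m R} {B : Matrix m n R} {C : Matrix n m R} {D : Matrix m n R}

theorem mul_add_mul_inv_mul_eq (hDA : D * A = 0) (hDE : D * E = B * C) (hL : IsUnit (B * C)) :
    D * (A + E * (B * C)⁻¹ * B) = B := by
  rw [Matrix.mul_add, hDA, zero_add, ← Matrix.mul_assoc, ← Matrix.mul_assoc, hDE,
    mul_nonsing_inv _ ((isUnit_iff_isUnit_det _).mp hL), Matrix.one_mul]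

variable [DecidableEq n]

theorem mul_inv_add_mul_inv_mul_eq (hDA : D * A = 0) (hDE : D * E = B * C)
    (hL : IsUnit (B * C)) (hS : IsUnit (A + E * (B * C)⁻¹ * B)) :
    B * (A + E * (B * C)⁻¹ * B)⁻¹ = D := by
  calc B * (A + E * (B * C)⁻¹ * B)⁻¹
      = D * (A + E * (B * C)⁻¹ * B) * (A + E * (B * C)⁻¹ * B)⁻¹ := by
        rw [mul_add_mul_inv_mul_eq hDA hDE hL]
    _ = D := by
        rw [Matrix.mul_assoc, mul_nonsing_inv _ ((isUnit_iff_isUnit_det _).mp hS), Matrix.mul_one]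

noncomputable def saddleInvTopLeft (A : Matrix n n R) (E : Matrix n m R) (B : Matrix m n R)
    (C : Matrix n m R) (D : Matrix m n R) : Matrix n n R :=
  (A + E * (B * C)⁻¹ * B)⁻¹ * (1 - E * (B * C)⁻¹ * D)

theorem mul_saddleInvTopLeft_eq_zero (hDA : D * A = 0) (hDE : D * E = B * C)
    (hL : IsUnit (B * C)) (hS : IsUnit (A + E * (B * C)⁻¹ * B)) :
    B * saddleInvTopLeft A E B C D = 0 := by
  rw [saddleInvTopLeft, ← Matrix.mul_assoc, mul_inv_add_mul_inv_mul_eq hDA hDE hL hS,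
    Matrix.mul_sub, Matrix.mul_one, ← Matrix.mul_assoc, ← Matrix.mul_assoc, hDE,
    mul_nonsing_inv _ ((isUnit_iff_isUnit_det _).mp hL), Matrix.one_mul, sub_self]

theorem mul_saddleInvTopLeft_add_eq_one (hDA : D * A = 0) (hDE : D * E = B * C)
    (hL : IsUnit (B * C)) (hS : IsUnit (A + E * (B * C)⁻¹ * B)) :
    A * saddleInvTopLeft A E B C D + E * ((B * C)⁻¹ * D) = 1 := by
  have hSV :
      (A + E * (B * C)⁻¹ * B) * saddleInvTopLeft A E B C D = 1 - E * (B * C)⁻¹ * D := by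
    rw [saddleInvTopLeft, ← Matrix.mul_assoc, mul_nonsing_inv _ ((isUnit_iff_isUnit_det _).mp hS),
      Matrix.one_mul]
  calc A * saddleInvTopLeft A E B C D + E * ((B * C)⁻¹ * D)
      = (A + E * (B * C)⁻¹ * B) * saddleInvTopLeft A E B C D
          - E * (B * C)⁻¹ * (B * saddleInvTopLeft A E B C D) + E * ((B * C)⁻¹ * D) := by
        rw [Matrix.add_mul, Matrix.mul_assoc (E * _), add_sub_cancel_right]
    _ = 1 := by
        rw [hSV, mul_saddleInvTopLeft_eq_zero hDA hDE hL hS, Matrix.mul_zero, sub_zero,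
          Matrix.mul_assoc E, sub_add_cancel]

theorem fromBlocks_mul_fromBlocks_saddleInvTopLeft_eq_one (hAC : A * C = 0) (hDA : D * A = 0)
    (hDE : D * E = B * C) (hL : IsUnit (B * C)) (hS : IsUnit (A + E * (B * C)⁻¹ * B)) :
    fromBlocks A E B 0 *
        fromBlocks (saddleInvTopLeft A E B C D) (C * (B * C)⁻¹) ((B * C)⁻¹ * D) 0 = 1 := by
  have hACL : A * (C * (B * C)⁻¹) = 0 := by rw [← Matrix.mul_assoc, hAC, Matrix.zero_mul]
  have hBCL : B * (C * (B * C)⁻¹) = 1 := by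
    rw [← Matrix.mul_assoc, mul_nonsing_inv _ ((isUnit_iff_isUnit_det _).mp hL)]
  rw [fromBlocks_multiply, ← fromBlocks_one, mul_saddleInvTopLeft_add_eq_one hDA hDE hL hS,
    mul_saddleInvTopLeft_eq_zero hDA hDE hL hS, hACL, hBCL]
  simp

end Matrix

theorem stmt2_general {n m : ℕ}
    (A M : Matrix (Fin n) (Fin n) ℝ) (B : Matrix (Fin m) (Fin n) ℝ)
    (C : Matrix (Fin n) (Fin m) ℝ)
    (hA : Aᵀ = A) (hM : Mᵀ = M)
    (hAC : A * C = 0) (hMC : M * C = Bᵀ)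
    (hL : IsUnit (B * C))
    (hInv : IsUnit (A + Bᵀ * (B * C)⁻¹ * B))
    (V : Matrix (Fin n) (Fin n) ℝ)
    (hV : V = (A + Bᵀ * (B * C)⁻¹ * B)⁻¹ * (1 - Bᵀ * (B * C)⁻¹ * Cᵀ)) :
    (Matrix.fromBlocks A Bᵀ B 0) *
        (Matrix.fromBlocks V (C * (B * C)⁻¹) ((B * C)⁻¹ * Cᵀ) 0) = 1 ∧
      IsUnit (Matrix.fromBlocks A Bᵀ B (0 : Matrix (Fin m) (Fin m) ℝ)) ∧
      (Matrix.fromBlocks A Bᵀ B (0 : Matrix (Fin m) (Fin m) ℝ))⁻¹ =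
        Matrix.fromBlocks V (C * (B * C)⁻¹) ((B * C)⁻¹ * Cᵀ) 0 := by
  have hCA : Cᵀ * A = 0 := by rw [← hA, ← transpose_mul, hAC, transpose_zero]
  have hB : B = Cᵀ * M := by rw [← transpose_transpose B, ← hMC, transpose_mul, hM]
  have hCB : Cᵀ * Bᵀ = B * C := by rw [← hMC, ← Matrix.mul_assoc, ← hB]
  subst hV
  have key := fromBlocks_mul_fromBlocks_saddleInvTopLeft_eq_one hAC hCA hCB hL hInv
  exact ⟨key, .of_mul_eq_one _ key, inv_eq_right_inv key⟩

theorem stmt2 {n m : ℕ} (hn : 0 < n) (hm : 0 < m)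
    (A M : Matrix (Fin n) (Fin n) ℝ) (B : Matrix (Fin m) (Fin n) ℝ)
    (C : Matrix (Fin n) (Fin m) ℝ)
    (hA : Aᵀ = A) (hM : Mᵀ = M)
    (hAC : A * C = 0) (hMC : M * C = Bᵀ)
    (hL : IsUnit (B * C))
    (hInv : IsUnit (A + Bᵀ * (B * C)⁻¹ * B))
    (V : Matrix (Fin n) (Fin n) ℝ)
    (hV : V = (A + Bᵀ * (B * C)⁻¹ * B)⁻¹ * (1 - Bᵀ * (B * C)⁻¹ * Cᵀ)) :
    (Matrix.fromBlocks A Bᵀ B 0) *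
        (Matrix.fromBlocks V (C * (B * C)⁻¹) ((B * C)⁻¹ * Cᵀ) 0) = 1 ∧
      IsUnit (Matrix.fromBlocks A Bᵀ B (0 : Matrix (Fin m) (Fin m) ℝ)) ∧
      (Matrix.fromBlocks A Bᵀ B (0 : Matrix (Fin m) (Fin m) ℝ))⁻¹ =
        Matrix.fromBlocks V (C * (B * C)⁻¹) ((B * C)⁻¹ * Cᵀ) 0 :=
  stmt2_general A M B C hA hM hAC hMC hL hInv V hV
end

section
/- Let A be an n×n symmetric real matrix, M an n×n symmetric real matrix, B an m×n real matrix and C an n×m real matrix with A·C = 0, M·C = Bᵀ, L := B·C invertible, A + Bᵀ·L⁻¹·B invertible, and A − k²·M invertible for a real number k. Assume the column space of C equals the kernel of A (as linear maps x ↦ C·x and x ↦ A·x on ℝ^m and ℝ^n), and that ker(A) + ker(B) = ℝ^n. Set V := (A + Bᵀ·L⁻¹·B)⁻¹·(I − Bᵀ·L⁻¹·Cᵀ) and T := (A − k²·M)⁻¹·A·V. Then B·T = 0, and the block matrix [[A − k²·M, Bᵀ],[B, 0]] multiplied by [[T, C·L⁻¹],[L⁻¹·Cᵀ, k²·L⁻¹]]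 equals the identity. -/
/-!
With `L = B C`, the matrix `P = Bᵀ L⁻¹ Cᵀ` is an oblique projection with `P Bᵀ = Bᵀ` and
`Cᵀ P = Cᵀ`; symmetry of `M` gives `Cᵀ Bᵀ = L` and `B = Cᵀ M`. Since `Cᵀ A = 0`, `1 - P`
annihilates the correction `Bᵀ L⁻¹ B` in `S = A + Bᵀ L⁻¹ B`, so `(1 - P) S = A` and therefore
`A V = A S⁻¹ (1 - P) = (1 - P)² = 1 - P`. This is the `(A - k² M) T` block, and the remaining
blocks follow from `A C = 0` and `M C = Bᵀ`. For `B T = 0`, multiply `Cᵀ (A - k² M) = -k² B`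
on the right by `(A - k² M)⁻¹ A` and use `Cᵀ A = 0`; when `k = 0` instead `A` is invertible,
which forces `C = 0` and `B = 0`.
-/

open Matrix

namespace Matrix

section ObliqueProj

variable {l n R : Type*} [Fintype l] [Fintype n] [DecidableEq l] [CommRing R]

/-- The projection onto the column space of `X` along the kernel of `Y`. -/
noncomputable def obliqueProj (X : Matrix n l R) (Y : Matrix l n R) : Matrix n n R :=
  X * (Y * X)⁻¹ * Y

variable {X : Matrix n l R} {Y : Matrix l n R}

theorem obliqueProj_mul_self (h : IsUnit (Y * X)) : obliqueProj X Y * X = X := by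
  rw [obliqueProj, Matrix.mul_assoc, Matrix.mul_assoc,
    nonsing_inv_mul _ ((isUnit_iff_isUnit_det _).1 h), Matrix.mul_one]

theorem mul_obliqueProj_self (h : IsUnit (Y * X)) : Y * obliqueProj X Y = Y := by
  rw [obliqueProj, ← Matrix.mul_assoc, ← Matrix.mul_assoc,
    mul_nonsing_inv _ ((isUnit_iff_isUnit_det _).1 h), Matrix.one_mul]

theorem isIdempotentElem_obliqueProj (h : IsUnit (Y * X)) :
    IsIdempotentElem (obliqueProj X Y) := by
  rw [IsIdempotentElem]
  nth_rw 1 [obliqueProj]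
  rw [Matrix.mul_assoc, mul_obliqueProj_self h, obliqueProj]

variable [DecidableEq n]

theorem one_sub_obliqueProj_mul_add (h : IsUnit (Y * X)) {A : Matrix n n R} (hYA : Y * A = 0)
    (W : Matrix l n R) : (1 - obliqueProj X Y) * (A + X * W) = A := by
  have hPA : obliqueProj X Y * A = 0 := by rw [obliqueProj, Matrix.mul_assoc, hYA, Matrix.mul_zero]
  rw [Matrix.sub_mul, Matrix.one_mul, Matrix.mul_add, hPA, ← Matrix.mul_assoc,
    obliqueProj_mul_self h]
  abel

theorem mul_inv_add_mul_one_sub_obliqueProj (h : IsUnit (Y * X)) {A : Matrix n n R}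
    (hYA : Y * A = 0) {W : Matrix l n R} (hS : IsUnit (A + X * W)) :
    A * (A + X * W)⁻¹ * (1 - obliqueProj X Y) = 1 - obliqueProj X Y := by
  have hAS : A * (A + X * W)⁻¹ = 1 - obliqueProj X Y := calc
    A * (A + X * W)⁻¹ = (1 - obliqueProj X Y) * (A + X * W) * (A + X * W)⁻¹ := by
      rw [one_sub_obliqueProj_mul_add h hYA]
    _ = 1 - obliqueProj X Y := mul_nonsing_inv_cancel_right _ _ ((isUnit_iff_isUnit_det _).1 hS)
  rw [hAS, (isIdempotentElem_obliqueProj h).one_sub.eq]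

end ObliqueProj

theorem mul_inv_sub_smul_mul_eq_zero {l n R : Type*} [Fintype n] [DecidableEq n] [Field R]
    {A M : Matrix n n R} {B Y : Matrix l n R}
    (hYA : Y * A = 0) (hB : B = Y * M) {c : R} (hK : IsUnit (A - c • M)) :
    B * (A - c • M)⁻¹ * A = 0 := by
  have hKd := (isUnit_iff_isUnit_det _).1 hK
  rcases eq_or_ne c 0 with rfl | hc
  · rw [zero_smul, sub_zero] at hKd
    have hY : Y = 0 := by rw [← mul_nonsing_inv_cancel_right _ Y hKd, hYA, Matrix.zero_mul]
    rw [hB, hY, Matrix.zero_mul, Matrix.zero_mul, Matrix.zero_mul]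
  · have hYK : Y * (A - c • M) = -(c • B) := by
      rw [Matrix.mul_sub, hYA, Matrix.mul_smul, hB, zero_sub]
    have hcB : -(c • (B * (A - c • M)⁻¹ * A)) = 0 := by
      rw [← Matrix.smul_mul, ← Matrix.smul_mul, ← Matrix.neg_mul, ← Matrix.neg_mul, ← hYK,
        mul_nonsing_inv_cancel_right _ _ hKd, hYA]
    simpa [hc] using hcB

end Matrix

theorem stmt3_general {n m : ℕ} (k : ℝ)
    (A M : Matrix (Fin n) (Fin n) ℝ) (B : Matrix (Fin m) (Fin n) ℝ)
    (C : Matrix (Fin n) (Fin m) ℝ)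
    (hA : Aᵀ = A) (hM : Mᵀ = M)
    (hAC : A * C = 0) (hMC : M * C = Bᵀ)
    (hL : IsUnit (B * C))
    (hInv : IsUnit (A + Bᵀ * (B * C)⁻¹ * B))
    (hK : IsUnit (A - k ^ 2 • M))
    (V T : Matrix (Fin n) (Fin n) ℝ)
    (hV : V = (A + Bᵀ * (B * C)⁻¹ * B)⁻¹ * (1 - Bᵀ * (B * C)⁻¹ * Cᵀ))
    (hT : T = (A - k ^ 2 • M)⁻¹ * A * V) :
    B * T = 0 ∧
      (Matrix.fromBlocks (A - k ^ 2 • M) Bᵀ B 0) *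
        (Matrix.fromBlocks T (C * (B * C)⁻¹) ((B * C)⁻¹ * Cᵀ)
          (k ^ 2 • (B * C)⁻¹)) = 1 := by
  have hCA : Cᵀ * A = 0 := by rw [← hA, ← transpose_mul, hAC, transpose_zero]
  have hB : B = Cᵀ * M := by rw [← hM, ← transpose_mul, hMC, transpose_transpose]
  have hCB : Cᵀ * Bᵀ = B * C := by rw [← hMC, ← Matrix.mul_assoc, ← hB]
  have hLd := (isUnit_iff_isUnit_det _).1 hL
  have hP : obliqueProj Bᵀ Cᵀ = Bᵀ * (B * C)⁻¹ * Cᵀ := by rw [obliqueProj, hCB]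
  have hKT : (A - k ^ 2 • M) * T = 1 - Bᵀ * (B * C)⁻¹ * Cᵀ := by
    rw [hT, Matrix.mul_assoc, mul_nonsing_inv_cancel_left _ _ ((isUnit_iff_isUnit_det _).1 hK),
      hV, ← Matrix.mul_assoc, Matrix.mul_assoc Bᵀ, ← hP]
    exact mul_inv_add_mul_one_sub_obliqueProj (hCB ▸ hL) hCA (by rwa [← Matrix.mul_assoc])
  have hBT : B * T = 0 := by
    rw [hT, ← Matrix.mul_assoc, ← Matrix.mul_assoc, mul_inv_sub_smul_mul_eq_zero hCA hB hK,
      Matrix.zero_mul]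
  have hKC : (A - k ^ 2 • M) * (C * (B * C)⁻¹) + Bᵀ * (k ^ 2 • (B * C)⁻¹) = 0 := by
    rw [← Matrix.mul_assoc, Matrix.sub_mul, hAC, Matrix.smul_mul, hMC, Matrix.mul_smul]
    simp only [zero_sub, Matrix.neg_mul, Matrix.smul_mul, neg_add_cancel]
  refine ⟨hBT, ?_⟩
  rw [fromBlocks_multiply, hKT, hBT, hKC, ← Matrix.mul_assoc B, mul_nonsing_inv _ hLd,
    ← Matrix.mul_assoc Bᵀ]
  simp only [Matrix.zero_mul, add_zero, sub_add_cancel, fromBlocks_one]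

theorem stmt3 {n m : ℕ} (hn : 0 < n) (hm : 0 < m) (k : ℝ)
    (A M : Matrix (Fin n) (Fin n) ℝ) (B : Matrix (Fin m) (Fin n) ℝ)
    (C : Matrix (Fin n) (Fin m) ℝ)
    (hA : Aᵀ = A) (hM : Mᵀ = M)
    (hAC : A * C = 0) (hMC : M * C = Bᵀ)
    (hL : IsUnit (B * C))
    (hInv : IsUnit (A + Bᵀ * (B * C)⁻¹ * B))
    (hK : IsUnit (A - k ^ 2 • M))
    (hrange : LinearMap.range C.mulVecLin = LinearMap.ker A.mulVecLin)
    (hker : LinearMap.ker A.mulVecLin ⊔ LinearMap.ker B.mulVecLin = ⊤)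
    (V T : Matrix (Fin n) (Fin n) ℝ)
    (hV : V = (A + Bᵀ * (B * C)⁻¹ * B)⁻¹ * (1 - Bᵀ * (B * C)⁻¹ * Cᵀ))
    (hT : T = (A - k ^ 2 • M)⁻¹ * A * V) :
    B * T = 0 ∧
      (Matrix.fromBlocks (A - k ^ 2 • M) Bᵀ B 0) *
        (Matrix.fromBlocks T (C * (B * C)⁻¹) ((B * C)⁻¹ * Cᵀ)
          (k ^ 2 • (B * C)⁻¹)) = 1 :=
  stmt3_general k A M B C hA hM hAC hMC hL hInv hK V T hV hT
end

section
/- Let A be an n×n symmetric real matrix, M an n×n symmetric real matrix, B an m×n real matrix and C an n×m real matrix with A·C = 0, M·C = Bᵀ, L := B·C invertible, and A − k²·M invertible for a real number k. Assume the kernel of A is contained in the column space of C and that ker(A) + ker(B) = ℝ^n. Then for every real number η with η ≠ k², the matrix A + η·Bᵀ·L⁻¹·B − k²·M is invertible. -/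
/-!
Write `N = A + η • Bᵀ L⁻¹ B - k • M` with `L = B C`. Multiplying on the left by `Cᵀ` kills `A`
(`Cᵀ A = (A C)ᵀ = 0`), turns `M` into `B`, and turns `Bᵀ L⁻¹ B` into `B` because `L = Cᵀ M C` is
symmetric; so `Cᵀ N = (η - k) • B`. Hence `N x = 0` with `η ≠ k` forces `B x = 0`, and then
`(A - k • M) x = N x = 0`, so `x = 0`.
-/

open Matrix

variable {ι κ 𝕜 : Type*} [Fintype ι] [Field 𝕜]

theorem Matrix.isUnit_of_mulVec_eq_zero [DecidableEq ι] {N : Matrix ι ι 𝕜}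
    (h : ∀ x, N *ᵥ x = 0 → x = 0) : IsUnit N := by
  rw [isUnit_iff_isUnit_det, isUnit_iff_ne_zero]
  intro hdet
  obtain ⟨x, hx, hNx⟩ := exists_mulVec_eq_zero_iff.mpr hdet
  exact hx (h x hNx)

theorem Matrix.transpose_mul_eq_of_mul_eq_transpose {M : Matrix ι ι 𝕜} {B : Matrix κ ι 𝕜}
    {C : Matrix ι κ 𝕜} (hM : Mᵀ = M) (hMC : M * C = Bᵀ) : Cᵀ * M = B := by
  rw [← transpose_transpose B, ← hMC, transpose_mul, hM]

theorem Matrix.isSymm_mul_of_mul_eq_transpose {M : Matrix ι ι 𝕜} {B : Matrix κ ι 𝕜}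
    {C : Matrix ι κ 𝕜} (hM : Mᵀ = M) (hMC : M * C = Bᵀ) : (B * C).IsSymm := by
  rw [IsSymm, ← transpose_mul_eq_of_mul_eq_transpose hM hMC, transpose_mul, transpose_mul, hM,
    transpose_transpose, Matrix.mul_assoc]

theorem Matrix.transpose_mul_add_smul_sub_smul [Fintype κ] [DecidableEq κ]
    {A M : Matrix ι ι 𝕜} {B : Matrix κ ι 𝕜} {C : Matrix ι κ 𝕜} (hA : Aᵀ = A) (hM : Mᵀ = M)
    (hAC : A * C = 0) (hMC : M * C = Bᵀ)
    (hL : IsUnit (B * C)) (η k : 𝕜) :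
    Cᵀ * (A + η • (Bᵀ * (B * C)⁻¹ * B) - k • M) = (η - k) • B := by
  have hCA : Cᵀ * A = 0 := by rw [← hA, ← transpose_mul, hAC, transpose_zero]
  have hCB : Cᵀ * Bᵀ = B * C := by
    rw [← transpose_mul, (isSymm_mul_of_mul_eq_transpose hM hMC).eq]
  have hLL : (B * C) * (B * C)⁻¹ = 1 := mul_nonsing_inv _ ((isUnit_iff_isUnit_det _).mp hL)
  rw [Matrix.mul_sub, Matrix.mul_add, Matrix.mul_smul, Matrix.mul_smul, hCA,
    transpose_mul_eq_of_mul_eq_transpose hM hMC, ← Matrix.mul_assoc, ← Matrix.mul_assoc, hCB,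
    hLL, Matrix.one_mul, zero_add, sub_smul]

theorem Matrix.isUnit_add_smul_sub_smul [DecidableEq ι] [Fintype κ] [DecidableEq κ]
    {A M : Matrix ι ι 𝕜} {B : Matrix κ ι 𝕜} {C : Matrix ι κ 𝕜} (hA : Aᵀ = A) (hM : Mᵀ = M)
    (hAC : A * C = 0) (hMC : M * C = Bᵀ)
    (hL : IsUnit (B * C)) {η k : 𝕜} (hK : IsUnit (A - k • M)) (hη : η ≠ k) :
    IsUnit (A + η • (Bᵀ * (B * C)⁻¹ * B) - k • M) := by
  refine isUnit_of_mulVec_eq_zero fun x hx => ?_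
  have hBx : B *ᵥ x = 0 := by
    have h := congrArg (Cᵀ *ᵥ ·) hx
    simp only [mulVec_mulVec, transpose_mul_add_smul_sub_smul hA hM hAC hMC hL, smul_mulVec,
      mulVec_zero] at h
    exact (smul_eq_zero.mp h).resolve_left (sub_ne_zero.mpr hη)
  have hKx : (A - k • M) *ᵥ x = 0 := by
    rw [← hx, add_sub_right_comm, add_mulVec, smul_mulVec, ← mulVec_mulVec, hBx, mulVec_zero,
      smul_zero, add_zero]
  exact (mulVec_injective_iff_isUnit.mpr hK) (hKx.trans (mulVec_zero _).symm)

theorem stmt4_general {n m : ℕ} (k : ℝ)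
    (A M : Matrix (Fin n) (Fin n) ℝ) (B : Matrix (Fin m) (Fin n) ℝ)
    (C : Matrix (Fin n) (Fin m) ℝ)
    (hA : Aᵀ = A) (hM : Mᵀ = M)
    (hAC : A * C = 0) (hMC : M * C = Bᵀ)
    (hL : IsUnit (B * C))
    (hK : IsUnit (A - k ^ 2 • M)) :
    ∀ η : ℝ, η ≠ k ^ 2 →
      IsUnit (A + η • (Bᵀ * (B * C)⁻¹ * B) - k ^ 2 • M) :=
  fun _ hη => isUnit_add_smul_sub_smul hA hM hAC hMC hL hK hη

theorem stmt4 {n m : ℕ} (hn : 0 < n) (hm : 0 < m) (k : ℝ)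
    (A M : Matrix (Fin n) (Fin n) ℝ) (B : Matrix (Fin m) (Fin n) ℝ)
    (C : Matrix (Fin n) (Fin m) ℝ)
    (hA : Aᵀ = A) (hM : Mᵀ = M)
    (hAC : A * C = 0) (hMC : M * C = Bᵀ)
    (hL : IsUnit (B * C))
    (hK : IsUnit (A - k ^ 2 • M))
    (hker : LinearMap.ker A.mulVecLin ≤ LinearMap.range C.mulVecLin)
    (hsum : LinearMap.ker A.mulVecLin ⊔ LinearMap.ker B.mulVecLin = ⊤) :
    ∀ η : ℝ, η ≠ k ^ 2 →
      IsUnit (A + η • (Bᵀ * (B * C)⁻¹ * B) - k ^ 2 • M) :=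
  stmt4_general k A M B C hA hM hAC hMC hL hK
end

section
/- Let A be an n×n symmetric real matrix, M an n×n symmetric real matrix, B an m×n real matrix and C an n×m real matrix with A·C = 0, M·C = Bᵀ, L := B·C invertible, and A − k²·M invertible for a real number k. Assume the column space of C equals the kernel of A and that ker(A) + ker(B) = ℝ^n. Then the kernel of the matrix A + k²·Bᵀ·L⁻¹·B − k²·M equals the kernel of A (as kernels of the induced linear maps on ℝ^n). -/
/-!
Write `N = A + k²·Bᵀ L⁻¹ B - k²·M`. Since `A C = 0`, `M C = Bᵀ` and `L = B C`, we get
`N C = k²·Bᵀ - k²·Bᵀ = 0`, so `ker A = range C ⊆ ker N`. On `ker B` the correction term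
vanishes and `N` agrees with the invertible `A - k²·M`. Splitting `x ∈ ker N` as `u + v` with `u ∈ ker A`, `v ∈ ker B`
gives `(A - k²·M) v = N v = N x = 0`, so `v = 0` and `x ∈ ker A`.
-/

open Matrix

theorem LinearMap.ker_eq_of_sup_eq_top_of_eqOn {R V W : Type*} [Ring R] [AddCommGroup V]
    [Module R V] [AddCommGroup W] [Module R W] {f g : V →ₗ[R] W} {U U' : Submodule R V}
    (hsup : U ⊔ U' = ⊤) (hU : U ≤ LinearMap.ker f) (hfg : Set.EqOn f g U')
    (hg : Function.Injective g) : LinearMap.ker f = U := by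
  refine le_antisymm (fun x hx => ?_) hU
  obtain ⟨u, hu, v, hv, rfl⟩ := Submodule.mem_sup.mp (hsup ▸ Submodule.mem_top : x ∈ U ⊔ U')
  have hgv : g v = 0 := by
    have hfx : f u + f v = 0 := (map_add f u v).symm.trans hx
    rwa [hU hu, zero_add, hfg hv] at hfx
  rw [hg (hgv.trans g.map_zero.symm), add_zero]
  exact hu

namespace Matrix

variable {R ι κ : Type*} [CommRing R] [Fintype ι] [Fintype κ]

theorem add_smul_transpose_inv_mul_sub_smul_mul_eq_zero [DecidableEq κ] {A M : Matrix ι ι R}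
    {B : Matrix κ ι R} {C : Matrix ι κ R} (c : R) (hAC : A * C = 0) (hMC : M * C = Bᵀ)
    (hL : IsUnit (B * C)) :
    (A + c • (Bᵀ * (B * C)⁻¹ * B) - c • M) * C = 0 := by
  have hinv : (B * C)⁻¹ * (B * C) = 1 :=
    nonsing_inv_mul _ ((isUnit_iff_isUnit_det _).mp hL)
  rw [Matrix.sub_mul, Matrix.add_mul, hAC, Matrix.smul_mul, Matrix.smul_mul, hMC,
    Matrix.mul_assoc, Matrix.mul_assoc, hinv, Matrix.mul_one, zero_add, sub_self]

theorem add_smul_transpose_mul_mul_sub_smul_mulVec_of_mulVec_eq_zero (A M : Matrix ι ι R)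
    {B : Matrix κ ι R} (L : Matrix κ κ R) (c : R) {v : ι → R} (hv : B *ᵥ v = 0) :
    (A + c • (Bᵀ * L * B) - c • M) *ᵥ v = (A - c • M) *ᵥ v := by
  rw [sub_mulVec, add_mulVec, smul_mulVec, ← mulVec_mulVec, hv, mulVec_zero, smul_zero,
    add_zero, sub_mulVec]

end Matrix

theorem stmt5_general {n m : ℕ} (k : ℝ)
    (A M : Matrix (Fin n) (Fin n) ℝ) (B : Matrix (Fin m) (Fin n) ℝ)
    (C : Matrix (Fin n) (Fin m) ℝ)
    (hAC : A * C = 0) (hMC : M * C = Bᵀ)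
    (hL : IsUnit (B * C))
    (hK : IsUnit (A - k ^ 2 • M))
    (hrange : LinearMap.range C.mulVecLin = LinearMap.ker A.mulVecLin)
    (hsum : LinearMap.ker A.mulVecLin ⊔ LinearMap.ker B.mulVecLin = ⊤) :
    LinearMap.ker (A + k ^ 2 • (Bᵀ * (B * C)⁻¹ * B) - k ^ 2 • M).mulVecLin =
      LinearMap.ker A.mulVecLin := by
  refine LinearMap.ker_eq_of_sup_eq_top_of_eqOn hsum ?_ (g := (A - k ^ 2 • M).mulVecLin)
    (fun v hv => add_smul_transpose_mul_mul_sub_smul_mulVec_of_mulVec_eq_zero A M _ _ hv)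
    (mulVec_injective_iff_isUnit.mpr hK)
  rw [← hrange]
  rintro _ ⟨y, rfl⟩
  simp only [LinearMap.mem_ker, mulVecLin_apply, mulVec_mulVec,
    add_smul_transpose_inv_mul_sub_smul_mul_eq_zero _ hAC hMC hL, zero_mulVec]

theorem stmt5 {n m : ℕ} (hn : 0 < n) (hm : 0 < m) (k : ℝ)
    (A M : Matrix (Fin n) (Fin n) ℝ) (B : Matrix (Fin m) (Fin n) ℝ)
    (C : Matrix (Fin n) (Fin m) ℝ)
    (hA : Aᵀ = A) (hM : Mᵀ = M)
    (hAC : A * C = 0) (hMC : M * C = Bᵀ)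
    (hL : IsUnit (B * C))
    (hK : IsUnit (A - k ^ 2 • M))
    (hrange : LinearMap.range C.mulVecLin = LinearMap.ker A.mulVecLin)
    (hsum : LinearMap.ker A.mulVecLin ⊔ LinearMap.ker B.mulVecLin = ⊤) :
    LinearMap.ker (A + k ^ 2 • (Bᵀ * (B * C)⁻¹ * B) - k ^ 2 • M).mulVecLin =
      LinearMap.ker A.mulVecLin :=
  stmt5_general k A M B C hAC hMC hL hK hrange hsum
end

section
/- Let A be an n×n real matrix, M an n×n real matrix, B an m×n real matrix and C an n×m real matrix with A·C = 0, M·C = Bᵀ, and L := B·C invertible. Let k, η be real numbers with η ≠ k² and suppose A + η·Bᵀ·L⁻¹·B − k²·M is invertible. Then (A + η·Bᵀ·L⁻¹·B − k²·M)⁻¹·(I − Bᵀ·L⁻¹·Cᵀ) = (A + η·Bᵀ·L⁻¹·B − k²·M)⁻¹ − (1/(η − k²))·C·L⁻¹·Cᵀ. -/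
/-!
Write `S = A + η Bᵀ L⁻¹ B - k² M`. Since `A C = 0`, `M C = Bᵀ` and `L = B C`, the matrix `S`
maps `C` to `(η - k²) Bᵀ`, so `S⁻¹ Bᵀ = (η - k²)⁻¹ C`; multiplying out
`S⁻¹ (I - Bᵀ L⁻¹ Cᵀ)` gives the claim.
-/

open Matrix

variable {ι κ : Type*} [Fintype ι]

theorem add_smul_sub_smul_mul_eq_smul_transpose {R : Type*} [CommRing R] [Fintype κ]
    [DecidableEq κ] {A M : Matrix ι ι R} {B : Matrix κ ι R} {C : Matrix ι κ R}
    (hAC : A * C = 0) (hMC : M * C = Bᵀ) (hL : IsUnit (B * C)) (η s : R) :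
    (A + η • (Bᵀ * (B * C)⁻¹ * B) - s • M) * C = (η - s) • Bᵀ := by
  have hLdet := (isUnit_iff_isUnit_det _).mp hL
  rw [Matrix.sub_mul, Matrix.add_mul, hAC, Matrix.smul_mul, Matrix.smul_mul, hMC,
    Matrix.mul_assoc, Matrix.mul_assoc, nonsing_inv_mul _ hLdet, Matrix.mul_one, zero_add, sub_smul]

theorem inv_mul_eq_inv_smul_of_mul_eq_smul {K : Type*} [Field K] [DecidableEq ι]
    {S : Matrix ι ι K} {C D : Matrix ι κ K} {c : K}
    (hS : IsUnit S) (hc : c ≠ 0) (hSC : S * C = c • D) : S⁻¹ * D = c⁻¹ • C := by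
  have hSdet := (isUnit_iff_isUnit_det _).mp hS
  calc
    S⁻¹ * D = c⁻¹ • (S⁻¹ * (c • D)) := by
      rw [Matrix.mul_smul, smul_smul, inv_mul_cancel₀ hc, one_smul]
    _ = c⁻¹ • C := by rw [← hSC, Matrix.nonsing_inv_mul_cancel_left S C hSdet]

theorem stmt6_general {n m : ℕ} (k η : ℝ)
    (A M : Matrix (Fin n) (Fin n) ℝ) (B : Matrix (Fin m) (Fin n) ℝ)
    (C : Matrix (Fin n) (Fin m) ℝ)
    (hAC : A * C = 0) (hMC : M * C = Bᵀ)
    (hL : IsUnit (B * C))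
    (hη : η ≠ k ^ 2)
    (hInv : IsUnit (A + η • (Bᵀ * (B * C)⁻¹ * B) - k ^ 2 • M)) :
    (A + η • (Bᵀ * (B * C)⁻¹ * B) - k ^ 2 • M)⁻¹ * (1 - Bᵀ * (B * C)⁻¹ * Cᵀ) =
      (A + η • (Bᵀ * (B * C)⁻¹ * B) - k ^ 2 • M)⁻¹ -
        (1 / (η - k ^ 2)) • (C * (B * C)⁻¹ * Cᵀ) := by
  have hSBt := inv_mul_eq_inv_smul_of_mul_eq_smul hInv (sub_ne_zero.mpr hη)
    (add_smul_sub_smul_mul_eq_smul_transpose hAC hMC hL η (k ^ 2))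
  rw [Matrix.mul_sub, Matrix.mul_one, ← Matrix.mul_assoc, ← Matrix.mul_assoc, hSBt, one_div,
    Matrix.smul_mul, Matrix.smul_mul]

theorem stmt6 {n m : ℕ} (hn : 0 < n) (hm : 0 < m) (k η : ℝ)
    (A M : Matrix (Fin n) (Fin n) ℝ) (B : Matrix (Fin m) (Fin n) ℝ)
    (C : Matrix (Fin n) (Fin m) ℝ)
    (hAC : A * C = 0) (hMC : M * C = Bᵀ)
    (hL : IsUnit (B * C))
    (hη : η ≠ k ^ 2)
    (hInv : IsUnit (A + η • (Bᵀ * (B * C)⁻¹ * B) - k ^ 2 • M)) :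
    (A + η • (Bᵀ * (B * C)⁻¹ * B) - k ^ 2 • M)⁻¹ * (1 - Bᵀ * (B * C)⁻¹ * Cᵀ) =
      (A + η • (Bᵀ * (B * C)⁻¹ * B) - k ^ 2 • M)⁻¹ -
        (1 / (η - k ^ 2)) • (C * (B * C)⁻¹ * Cᵀ) :=
  stmt6_general k η A M B C hAC hMC hL hη hInv
end

section
/- Let A be an n×n symmetric real matrix, M an n×n symmetric real matrix, B an m×n real matrix and C an n×m real matrix with A·C = 0, M·C = Bᵀ, L := B·C invertible, and A − k²·M invertible for a real number k. Assume the column space of C equals the kernel of A and that ker(A) + ker(B) = ℝ^n. Then for any two real numbers η₁, η₂ with η₁ ≠ k² and η₂ ≠ k² (so that A + ηᵢ·Bᵀ·L⁻¹·B − k²·M is invertible), (A + η₁·Bᵀ·L⁻¹·B − k²·M)⁻¹·(I − Bᵀ·L⁻¹·Cᵀ) = (A + η₂·Bᵀ·L⁻¹·B − k²·M)⁻¹·(I − Bᵀ·L⁻¹·Cᵀ); that is, this matrix is independent of η. -/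
/-!
With `K = A - k² M`, the relations `A C = 0` and `M C = Bᵀ` give `K C = -k² Bᵀ`; this makes
`K⁻¹ + d • C L⁻¹ Cᵀ` an explicit inverse of `K + η • Bᵀ L⁻¹ B` for a scalar `d` depending on `η`,
as long as `η ≠ k²`. Since `Cᵀ (1 - Bᵀ L⁻¹ Cᵀ) = 0` (using that `L = Cᵀ M C` is symmetric), the
correction term is killed by the right factor, leaving `K⁻¹ (1 - Bᵀ L⁻¹ Cᵀ)` for every such `η`.
-/

open Matrix

namespace Matrix

variable {ι κ 𝕜 : Type*} [Fintype ι] [Field 𝕜]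
  {K : Matrix ι ι 𝕜} {B : Matrix κ ι 𝕜} {C : Matrix ι κ 𝕜} {c : 𝕜}

lemma transpose_mul_eq_smul_of_mul_eq_smul_transpose (hK : K.IsSymm) (hKC : K * C = c • Bᵀ) :
    Cᵀ * K = c • B := by
  simpa [transpose_mul, hK.eq] using congrArg transpose hKC

lemma transpose_mul_transpose_eq_mul (hK : K.IsSymm) (hKC : K * C = c • Bᵀ) (hc : c ≠ 0) :
    Cᵀ * Bᵀ = B * C := by
  refine smul_right_injective _ hc ?_
  change c • (Cᵀ * Bᵀ) = c • (B * C)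
  rw [← Matrix.mul_smul, ← hKC, ← Matrix.mul_assoc,
    transpose_mul_eq_smul_of_mul_eq_smul_transpose hK hKC, smul_mul]

variable [DecidableEq ι]

lemma mul_inv_eq_smul_transpose (hK : K.IsSymm) (hKu : IsUnit K) (hKC : K * C = c • Bᵀ)
    (hc : c ≠ 0) : B * K⁻¹ = c⁻¹ • Cᵀ := by
  have hB : B = c⁻¹ • (Cᵀ * K) := by
    rw [transpose_mul_eq_smul_of_mul_eq_smul_transpose hK hKC, smul_smul, inv_mul_cancel₀ hc,
      one_smul]
  rw [hB, smul_mul, mul_nonsing_inv_cancel_right _ _ ((isUnit_iff_isUnit_det K).mp hKu)]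

variable [Fintype κ] [DecidableEq κ]

lemma transpose_mul_one_sub_eq_zero (hK : K.IsSymm) (hKC : K * C = c • Bᵀ) (hc : c ≠ 0)
    (hL : IsUnit (B * C)) : Cᵀ * (1 - Bᵀ * (B * C)⁻¹ * Cᵀ) = 0 := by
  rw [Matrix.mul_sub, Matrix.mul_one, ← Matrix.mul_assoc, ← Matrix.mul_assoc,
    transpose_mul_transpose_eq_mul hK hKC hc,
    mul_nonsing_inv _ ((isUnit_iff_isUnit_det _).mp hL), Matrix.one_mul, sub_self]

lemma inv_add_smul_eq (hK : K.IsSymm) (hKu : IsUnit K) (hKC : K * C = c • Bᵀ) (hc : c ≠ 0)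
    (hL : IsUnit (B * C)) {η : 𝕜} (hη : c + η ≠ 0) :
    (K + η • (Bᵀ * (B * C)⁻¹ * B))⁻¹ =
      K⁻¹ - (η / (c * (c + η))) • (C * (B * C)⁻¹ * Cᵀ) := by
  set T := Bᵀ * (B * C)⁻¹ * Cᵀ
  have hKR : K * (C * (B * C)⁻¹ * Cᵀ) = c • T := by
    simp only [T, ← Matrix.mul_assoc, hKC, smul_mul]
  have hPK : Bᵀ * (B * C)⁻¹ * B * K⁻¹ = c⁻¹ • T := by
    rw [Matrix.mul_assoc _ B, mul_inv_eq_smul_transpose hK hKu hKC hc, Matrix.mul_smul]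
  have hPR : Bᵀ * (B * C)⁻¹ * B * (C * (B * C)⁻¹ * Cᵀ) = T := by
    simp only [T, Matrix.mul_assoc]
    rw [← Matrix.mul_assoc B C, nonsing_inv_mul_cancel_left _ _ ((isUnit_iff_isUnit_det _).mp hL)]
  refine inv_eq_right_inv ?_
  simp only [Matrix.add_mul, Matrix.mul_sub, Matrix.mul_smul, Matrix.smul_mul, hKR, hPK, hPR,
    mul_nonsing_inv _ ((isUnit_iff_isUnit_det K).mp hKu), smul_smul]
  rw [← add_smul, smul_smul, add_sub_assoc, ← sub_smul, add_eq_left, smul_eq_zero]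
  left
  field_simp
  ring

lemma inv_add_smul_mul_one_sub (hK : K.IsSymm) (hKu : IsUnit K) (hKC : K * C = c • Bᵀ)
    (hL : IsUnit (B * C)) {η : 𝕜} (hη : c + η ≠ 0) :
    (K + η • (Bᵀ * (B * C)⁻¹ * B))⁻¹ * (1 - Bᵀ * (B * C)⁻¹ * Cᵀ) =
      K⁻¹ * (1 - Bᵀ * (B * C)⁻¹ * Cᵀ) := by
  by_cases hc : c = 0
  -- then `C = 0`, so the junk value `(B * C)⁻¹ = 0` makes the perturbation vanish
  · have hC : C = 0 := by
      rw [← nonsing_inv_mul_cancel_left K C ((isUnit_iff_isUnit_det K).mp hKu), hKC, hc,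
        zero_smul, Matrix.mul_zero]
    simp [hC]
  rw [inv_add_smul_eq hK hKu hKC hc hL hη, Matrix.sub_mul, smul_mul, Matrix.mul_assoc (C * _),
    transpose_mul_one_sub_eq_zero hK hKC hc hL, Matrix.mul_zero, smul_zero, sub_zero]

end Matrix

theorem stmt7_general {n m : ℕ} (k η₁ η₂ : ℝ)
    (A M : Matrix (Fin n) (Fin n) ℝ) (B : Matrix (Fin m) (Fin n) ℝ)
    (C : Matrix (Fin n) (Fin m) ℝ)
    (hA : Aᵀ = A) (hM : Mᵀ = M)
    (hAC : A * C = 0) (hMC : M * C = Bᵀ)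
    (hL : IsUnit (B * C))
    (hK : IsUnit (A - k ^ 2 • M))
    (hη₁ : η₁ ≠ k ^ 2) (hη₂ : η₂ ≠ k ^ 2) :
    (A + η₁ • (Bᵀ * (B * C)⁻¹ * B) - k ^ 2 • M)⁻¹ * (1 - Bᵀ * (B * C)⁻¹ * Cᵀ) =
      (A + η₂ • (Bᵀ * (B * C)⁻¹ * B) - k ^ 2 • M)⁻¹ *
        (1 - Bᵀ * (B * C)⁻¹ * Cᵀ) := by
  have hKsymm : (A - k ^ 2 • M).IsSymm := IsSymm.sub hA (IsSymm.smul hM _)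
  have hKC : (A - k ^ 2 • M) * C = (-k ^ 2) • Bᵀ := by
    rw [Matrix.sub_mul, hAC, smul_mul, hMC, zero_sub, neg_smul]
  have key (η : ℝ) (hη : η ≠ k ^ 2) :
      (A + η • (Bᵀ * (B * C)⁻¹ * B) - k ^ 2 • M)⁻¹ * (1 - Bᵀ * (B * C)⁻¹ * Cᵀ) =
        (A - k ^ 2 • M)⁻¹ * (1 - Bᵀ * (B * C)⁻¹ * Cᵀ) := by
    rw [add_sub_right_comm]
    exact inv_add_smul_mul_one_sub hKsymm hK hKC hL (by rwa [neg_add_eq_sub, sub_ne_zero])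
  rw [key η₁ hη₁, key η₂ hη₂]

theorem stmt7 {n m : ℕ} (hn : 0 < n) (hm : 0 < m) (k η₁ η₂ : ℝ)
    (A M : Matrix (Fin n) (Fin n) ℝ) (B : Matrix (Fin m) (Fin n) ℝ)
    (C : Matrix (Fin n) (Fin m) ℝ)
    (hA : Aᵀ = A) (hM : Mᵀ = M)
    (hAC : A * C = 0) (hMC : M * C = Bᵀ)
    (hL : IsUnit (B * C))
    (hK : IsUnit (A - k ^ 2 • M))
    (hrange : LinearMap.range C.mulVecLin = LinearMap.ker A.mulVecLin)
    (hsum : LinearMap.ker A.mulVecLin ⊔ LinearMap.ker B.mulVecLin = ⊤)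
    (hη₁ : η₁ ≠ k ^ 2) (hη₂ : η₂ ≠ k ^ 2) :
    (A + η₁ • (Bᵀ * (B * C)⁻¹ * B) - k ^ 2 • M)⁻¹ * (1 - Bᵀ * (B * C)⁻¹ * Cᵀ) =
      (A + η₂ • (Bᵀ * (B * C)⁻¹ * B) - k ^ 2 • M)⁻¹ *
        (1 - Bᵀ * (B * C)⁻¹ * Cᵀ) :=
  stmt7_general k η₁ η₂ A M B C hA hM hAC hMC hL hK hη₁ hη₂
end

section
/- Let A be an n×n symmetric real matrix, M an n×n symmetric real matrix, B an m×n real matrix and C an n×m real matrix with A·C = 0, M·C = Bᵀ, L := B·C invertible, and A − k²·M invertible for a real number k. Assume the column space of C equals the kernel of A and that ker(A) + ker(B) = ℝ^n. Then for every real η ≠ k² (so that A + η·Bᵀ·L⁻¹·B − k²·M is invertible), the block matrix [[A − k²·M, Bᵀ],[B, 0]] multiplied by [[(A + η·Bᵀ·L⁻¹·B − k²·M)⁻¹·(I − Bᵀ·L⁻¹·Cᵀ), C·L⁻¹],[L⁻¹·Cᵀ, k²·L⁻¹]] equals the identity matrix. -/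
/-!
Write `K = A - k²M` and `L = BC`. From `AC = 0`, `MC = Bᵀ` and symmetry, `KC = -k²Bᵀ` and
`CᵀK = -k²B`; moreover `k ≠ 0`, since otherwise `K = A` is invertible and `AC = 0` forces `C = 0`.
Then `F = CL⁻¹B` is idempotent and `K + ηBᵀL⁻¹B = K(1 - (η/k²)F)`, which is invertible for
`η ≠ k²`. Since `BK⁻¹ = -k⁻²Cᵀ`, the matrix `Q = 1 - BᵀL⁻¹Cᵀ` satisfies `BK⁻¹Q = 0`, so
`(K + ηBᵀL⁻¹B)⁻¹Q = K⁻¹Q`, and the four blocks of the product reduce to `1, 0, 0, 1`.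
-/

open Matrix

theorem IsIdempotentElem.isUnit_one_sub_smul {𝕜 R : Type*} [Field 𝕜] [Ring R] [Algebra 𝕜 R]
    {F : R} (hF : IsIdempotentElem F) {s : 𝕜} (hs : s ≠ 1) : IsUnit (1 - s • F) := by
  have key : ∀ a b : 𝕜, a + b = a * b → (1 - a • F) * (1 - b • F) = 1 := by
    intro a b hab
    simp only [mul_sub, sub_mul, one_mul, mul_one, smul_mul_smul_comm, hF.eq]
    rw [← hab]; module
  have hs' : 1 - s ≠ 0 := sub_ne_zero.mpr hs.symm
  refine ⟨⟨1 - s • F, 1 - (-(s / (1 - s))) • F, key _ _ ?_, key _ _ ?_⟩, rfl⟩ <;>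
    field_simp <;> ring

namespace Matrix

variable {𝕜 n m : Type*} [Field 𝕜] [Fintype n]

theorem isIdempotentElem_mul_inv_mul [Fintype m] [DecidableEq m] {B : Matrix m n 𝕜}
    {C : Matrix n m 𝕜} (hL : IsUnit (B * C)) : IsIdempotentElem (C * (B * C)⁻¹ * B) := by
  have hL' := (isUnit_iff_isUnit_det _).mp hL
  calc C * (B * C)⁻¹ * B * (C * (B * C)⁻¹ * B)
      = C * ((B * C)⁻¹ * (B * C)) * (B * C)⁻¹ * B := by simp only [Matrix.mul_assoc]
    _ = C * (B * C)⁻¹ * B := by rw [nonsing_inv_mul _ hL', Matrix.mul_one]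

variable [DecidableEq n] {K : Matrix n n 𝕜} {B : Matrix m n 𝕜} {C : Matrix n m 𝕜} {t : 𝕜}

theorem inv_mul_transpose_eq_smul (hK : IsUnit K) (ht : t ≠ 0) (hKC : K * C = -t • Bᵀ) :
    K⁻¹ * Bᵀ = -t⁻¹ • C := by
  rw [show Bᵀ = -t⁻¹ • (K * C) by rw [hKC, smul_smul]; field_simp; simp,
    Matrix.mul_smul, nonsing_inv_mul_cancel_left _ _ ((isUnit_iff_isUnit_det _).mp hK)]

theorem mul_inv_eq_smul_transpose_s8 (hK : IsUnit K) (ht : t ≠ 0) (hCK : Cᵀ * K = -t • B) :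
    B * K⁻¹ = -t⁻¹ • Cᵀ := by
  rw [show B = -t⁻¹ • (Cᵀ * K) by rw [hCK, smul_smul]; field_simp; simp,
    Matrix.smul_mul, mul_nonsing_inv_cancel_right _ _ ((isUnit_iff_isUnit_det _).mp hK)]

variable [Fintype m] [DecidableEq m]

theorem mul_inv_mul_one_sub_eq_zero (hK : IsUnit K) (ht : t ≠ 0) (hL : IsUnit (B * C))
    (hKC : K * C = -t • Bᵀ) (hCK : Cᵀ * K = -t • B) :
    B * K⁻¹ * (1 - Bᵀ * (B * C)⁻¹ * Cᵀ) = 0 := by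
  have hL' := (isUnit_iff_isUnit_det _).mp hL
  rw [Matrix.mul_sub, Matrix.mul_one, sub_eq_zero, ← Matrix.mul_assoc, ← Matrix.mul_assoc,
    Matrix.mul_assoc B, inv_mul_transpose_eq_smul hK ht hKC, Matrix.mul_smul, Matrix.smul_mul,
    Matrix.smul_mul, mul_nonsing_inv _ hL', Matrix.one_mul, mul_inv_eq_smul_transpose_s8 hK ht hCK]

theorem add_smul_eq_mul_one_sub_smul (ht : t ≠ 0) (hKC : K * C = -t • Bᵀ) (η : 𝕜) :
    K + η • (Bᵀ * (B * C)⁻¹ * B) = K * (1 - (η / t) • (C * (B * C)⁻¹ * B)) := by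
  rw [Matrix.mul_sub, Matrix.mul_one, Matrix.mul_smul, ← Matrix.mul_assoc, ← Matrix.mul_assoc,
    hKC, Matrix.smul_mul, Matrix.smul_mul, smul_smul]
  field_simp
  rw [neg_smul, sub_neg_eq_add]

theorem isUnit_add_smul_transpose_mul_inv_mul (hK : IsUnit K) (ht : t ≠ 0) (hL : IsUnit (B * C))
    (hKC : K * C = -t • Bᵀ) {η : 𝕜} (hη : η ≠ t) :
    IsUnit (K + η • (Bᵀ * (B * C)⁻¹ * B)) := by
  rw [add_smul_eq_mul_one_sub_smul ht hKC]
  exact hK.mul <| (isIdempotentElem_mul_inv_mul hL).isUnit_one_sub_smul <| by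
    rwa [Ne, div_eq_one_iff_eq ht]

theorem inv_add_smul_mul_one_sub_eq (hK : IsUnit K) (ht : t ≠ 0) (hL : IsUnit (B * C))
    (hKC : K * C = -t • Bᵀ) (hCK : Cᵀ * K = -t • B) {η : 𝕜} (hη : η ≠ t) :
    (K + η • (Bᵀ * (B * C)⁻¹ * B))⁻¹ * (1 - Bᵀ * (B * C)⁻¹ * Cᵀ) =
      K⁻¹ * (1 - Bᵀ * (B * C)⁻¹ * Cᵀ) := by
  set Q := 1 - Bᵀ * (B * C)⁻¹ * Cᵀ
  have hP := (isUnit_iff_isUnit_det _).mp (isUnit_add_smul_transpose_mul_inv_mul hK ht hL hKC hη)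
  have hPK : (K + η • (Bᵀ * (B * C)⁻¹ * B)) * (K⁻¹ * Q) = Q := by
    rw [Matrix.add_mul, mul_nonsing_inv_cancel_left _ _ ((isUnit_iff_isUnit_det _).mp hK),
      Matrix.smul_mul, Matrix.mul_assoc, ← Matrix.mul_assoc B,
      mul_inv_mul_one_sub_eq_zero hK ht hL hKC hCK, Matrix.mul_zero, smul_zero, add_zero]
  conv_lhs => rw [← hPK, nonsing_inv_mul_cancel_left _ _ hP]

theorem fromBlocks_mul_fromBlocks_eq_one (hK : IsUnit K) (ht : t ≠ 0) (hL : IsUnit (B * C))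
    (hKC : K * C = -t • Bᵀ) (hCK : Cᵀ * K = -t • B) {η : 𝕜} (hη : η ≠ t) :
    fromBlocks K Bᵀ B 0 *
      fromBlocks ((K + η • (Bᵀ * (B * C)⁻¹ * B))⁻¹ * (1 - Bᵀ * (B * C)⁻¹ * Cᵀ))
        (C * (B * C)⁻¹) ((B * C)⁻¹ * Cᵀ) (t • (B * C)⁻¹) = 1 := by
  have hL' := (isUnit_iff_isUnit_det _).mp hL
  rw [fromBlocks_multiply, inv_add_smul_mul_one_sub_eq hK ht hL hKC hCK hη, ← fromBlocks_one]
  congr 1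
  · rw [mul_nonsing_inv_cancel_left _ _ ((isUnit_iff_isUnit_det _).mp hK), Matrix.mul_assoc,
      sub_add_cancel]
  · rw [← Matrix.mul_assoc, hKC, Matrix.mul_smul, Matrix.smul_mul, neg_smul, neg_add_cancel]
  · rw [← Matrix.mul_assoc, mul_inv_mul_one_sub_eq_zero hK ht hL hKC hCK, Matrix.zero_mul,
      add_zero]
  · rw [← Matrix.mul_assoc, mul_nonsing_inv _ hL', Matrix.zero_mul, add_zero]

end Matrix

theorem stmt8_general {n m : ℕ} (hm : 0 < m) (k : ℝ)
    (A M : Matrix (Fin n) (Fin n) ℝ) (B : Matrix (Fin m) (Fin n) ℝ)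
    (C : Matrix (Fin n) (Fin m) ℝ)
    (hA : Aᵀ = A) (hM : Mᵀ = M)
    (hAC : A * C = 0) (hMC : M * C = Bᵀ)
    (hL : IsUnit (B * C))
    (hK : IsUnit (A - k ^ 2 • M)) :
    ∀ η : ℝ, η ≠ k ^ 2 →
      (Matrix.fromBlocks (A - k ^ 2 • M) Bᵀ B 0) *
        (Matrix.fromBlocks
          ((A + η • (Bᵀ * (B * C)⁻¹ * B) - k ^ 2 • M)⁻¹ *
            (1 - Bᵀ * (B * C)⁻¹ * Cᵀ))
          (C * (B * C)⁻¹) ((B * C)⁻¹ * Cᵀ) (k ^ 2 • (B * C)⁻¹)) = 1 := by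
  intro η hη
  have hKC : (A - k ^ 2 • M) * C = -k ^ 2 • Bᵀ := by
    rw [Matrix.sub_mul, hAC, Matrix.smul_mul, hMC, zero_sub, neg_smul]
  have hCK : Cᵀ * (A - k ^ 2 • M) = -k ^ 2 • B := by
    simpa [Matrix.transpose_mul, hA, hM] using congrArg transpose hKC
  have hk : k ^ 2 ≠ 0 := by
    intro hk0
    have : Nonempty (Fin m) := ⟨⟨0, hm⟩⟩
    rw [hk0, zero_smul, sub_zero] at hK
    have hC : C = 0 := by
      rw [← nonsing_inv_mul_cancel_left A C ((isUnit_iff_isUnit_det A).mp hK), hAC,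
        Matrix.mul_zero]
    rw [hC, Matrix.mul_zero] at hL
    exact not_isUnit_zero hL
  rw [show A + η • (Bᵀ * (B * C)⁻¹ * B) - k ^ 2 • M
      = A - k ^ 2 • M + η • (Bᵀ * (B * C)⁻¹ * B) by abel]
  exact fromBlocks_mul_fromBlocks_eq_one hK hk hL hKC hCK hη

theorem stmt8 {n m : ℕ} (hn : 0 < n) (hm : 0 < m) (k : ℝ)
    (A M : Matrix (Fin n) (Fin n) ℝ) (B : Matrix (Fin m) (Fin n) ℝ)
    (C : Matrix (Fin n) (Fin m) ℝ)
    (hA : Aᵀ = A) (hM : Mᵀ = M)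
    (hAC : A * C = 0) (hMC : M * C = Bᵀ)
    (hL : IsUnit (B * C))
    (hK : IsUnit (A - k ^ 2 • M))
    (hrange : LinearMap.range C.mulVecLin = LinearMap.ker A.mulVecLin)
    (hsum : LinearMap.ker A.mulVecLin ⊔ LinearMap.ker B.mulVecLin = ⊤) :
    ∀ η : ℝ, η ≠ k ^ 2 →
      (Matrix.fromBlocks (A - k ^ 2 • M) Bᵀ B 0) *
        (Matrix.fromBlocks
          ((A + η • (Bᵀ * (B * C)⁻¹ * B) - k ^ 2 • M)⁻¹ *
            (1 - Bᵀ * (B * C)⁻¹ * Cᵀ))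
          (C * (B * C)⁻¹) ((B * C)⁻¹ * Cᵀ) (k ^ 2 • (B * C)⁻¹)) = 1 :=
  stmt8_general hm k A M B C hA hM hAC hMC hL hK
end

section
/- Let A be an n×n real matrix, B an m×n real matrix and C an n×m real matrix with A·C = 0 and L := B·C invertible. Let f ∈ ℝ^n and g ∈ ℝ^m, and suppose u₀ ∈ ℝ^n satisfies A·u₀ = f − Bᵀ·L⁻¹·Cᵀ·f. Define u := (I − C·L⁻¹·B)·u₀ + C·L⁻¹·g and p := L⁻¹·Cᵀ·f. Then A·u + Bᵀ·p = f and B·u = g; that is, (u, p) solves the saddle-point system [[A, Bᵀ],[B, 0]]·(u, p) = (f, g). -/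
open Matrix

namespace Matrix

variable {k m n R : Type*} [Fintype m] [Fintype n]

theorem mul_one_sub_mul_of_mul_eq_zero [DecidableEq n] [Ring R]
    {A : Matrix k n R} {C : Matrix n m R} (hAC : A * C = 0) (M : Matrix m n R) :
    A * (1 - C * M) = A := by
  rw [Matrix.mul_sub, Matrix.mul_one, ← Matrix.mul_assoc, hAC, Matrix.zero_mul, sub_zero]

theorem mul_mul_nonsing_inv_of_isUnit [DecidableEq m] [CommRing R]
    {B : Matrix m n R} {C : Matrix n m R} (hBC : IsUnit (B * C)) : B * (C * (B * C)⁻¹) = 1 := by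
  rw [← Matrix.mul_assoc, mul_nonsing_inv _ ((isUnit_iff_isUnit_det _).mp hBC)]

/-- `1 - C (BC)⁻¹ B` is the projection onto `ker B` along the range of `C`. -/
theorem mul_one_sub_mul_nonsing_inv_mul [DecidableEq m] [DecidableEq n] [CommRing R]
    {B : Matrix m n R} {C : Matrix n m R} (hBC : IsUnit (B * C)) :
    B * (1 - C * (B * C)⁻¹ * B) = 0 := by
  rw [Matrix.mul_sub, Matrix.mul_one, ← Matrix.mul_assoc, ← Matrix.mul_assoc,
    Matrix.mul_assoc B, mul_mul_nonsing_inv_of_isUnit hBC, Matrix.one_mul, sub_self]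

end Matrix

theorem stmt9_general {n m : ℕ}
    (A : Matrix (Fin n) (Fin n) ℝ) (B : Matrix (Fin m) (Fin n) ℝ)
    (C : Matrix (Fin n) (Fin m) ℝ)
    (hAC : A * C = 0)
    (hL : IsUnit (B * C))
    (f : Fin n → ℝ) (g : Fin m → ℝ) (u₀ : Fin n → ℝ)
    (hu₀ : A *ᵥ u₀ = f - (Bᵀ * (B * C)⁻¹ * Cᵀ) *ᵥ f)
    (u : Fin n → ℝ) (p : Fin m → ℝ)
    (hu : u = (1 - C * (B * C)⁻¹ * B) *ᵥ u₀ + (C * (B * C)⁻¹) *ᵥ g)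
    (hp : p = ((B * C)⁻¹ * Cᵀ) *ᵥ f) :
    A *ᵥ u + Bᵀ *ᵥ p = f ∧ B *ᵥ u = g := by
  subst hu hp
  simp only [mulVec_add, mulVec_mulVec]
  constructor
  · have hAC_inv : A * (C * (B * C)⁻¹) = 0 := by rw [← Matrix.mul_assoc, hAC, Matrix.zero_mul]
    rw [Matrix.mul_assoc C, mul_one_sub_mul_of_mul_eq_zero hAC, hAC_inv, zero_mulVec, add_zero,
      hu₀, ← Matrix.mul_assoc, sub_add_cancel]
  · rw [mul_one_sub_mul_nonsing_inv_mul hL, mul_mul_nonsing_inv_of_isUnit hL, zero_mulVec,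
      one_mulVec, zero_add]

theorem stmt9 {n m : ℕ} (hn : 0 < n) (hm : 0 < m)
    (A : Matrix (Fin n) (Fin n) ℝ) (B : Matrix (Fin m) (Fin n) ℝ)
    (C : Matrix (Fin n) (Fin m) ℝ)
    (hAC : A * C = 0)
    (hL : IsUnit (B * C))
    (f : Fin n → ℝ) (g : Fin m → ℝ) (u₀ : Fin n → ℝ)
    (hu₀ : A *ᵥ u₀ = f - (Bᵀ * (B * C)⁻¹ * Cᵀ) *ᵥ f)
    (u : Fin n → ℝ) (p : Fin m → ℝ)
    (hu : u = (1 - C * (B * C)⁻¹ * B) *ᵥ u₀ + (C * (B * C)⁻¹) *ᵥ g)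
    (hp : p = ((B * C)⁻¹ * Cᵀ) *ᵥ f) :
    A *ᵥ u + Bᵀ *ᵥ p = f ∧ B *ᵥ u = g :=
  stmt9_general A B C hAC hL f g u₀ hu₀ u p hu hp
end

section
/- Let A be an n×n symmetric real matrix, M an n×n symmetric real matrix, B an m×n real matrix and C an n×m real matrix with A·C = 0, M·C = Bᵀ, and L := B·C invertible. Let k, η be real numbers and suppose A + (η − k²)·M is invertible. Then the block matrix product [[(A + (η − k²)·M)⁻¹·(I − Bᵀ·L⁻¹·Cᵀ), C·L⁻¹],[L⁻¹·Cᵀ, k²·L⁻¹]] · [[A − k²·M, Bᵀ],[B, 0]] equals the block diagonal matrix [[(A + (η − k²)·M)⁻¹·(A + η·Bᵀ·L⁻¹·B − k²·M), 0],[0, I_m]]. -/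
/-!
Write `X = A + (η - k²) M` and `L = B C`. Transposing `A C = 0` and `M C = Bᵀ` gives
`Cᵀ A = 0` and `Cᵀ M = B`, hence `Cᵀ (A - k² M) = -k² B`, `Cᵀ Bᵀ = L` and `X C = (η - k²) Bᵀ`.
The last identity lets the correction `C L⁻¹ B` be written as `X⁻¹ (η - k²) Bᵀ L⁻¹ B`, so the
top-left block collapses to `X⁻¹ (A + η Bᵀ L⁻¹ B - k² M)`; the other three blocks follow from the
first two identities alone.
-/

open Matrix

namespace Matrix

variable {R ι κ : Type*} [CommRing R] [Fintype ι]

theorem transpose_mul_eq_of_mul_eq {A : Matrix ι ι R} {C D : Matrix ι κ R} (hA : Aᵀ = A)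
    (h : A * C = D) : Cᵀ * A = Dᵀ := by
  rw [← h, transpose_mul, hA]

variable {A M : Matrix ι ι R} {B : Matrix κ ι R} {C : Matrix ι κ R}

theorem transpose_mul_transpose_eq_mul_s10 (hMC : M * C = Bᵀ) (hCM : Cᵀ * M = B) :
    Cᵀ * Bᵀ = B * C := by
  rw [← hMC, ← Matrix.mul_assoc, hCM]

theorem transpose_mul_sub_smul (σ : R) (hCA : Cᵀ * A = 0) (hCM : Cᵀ * M = B) :
    Cᵀ * (A - σ • M) = -(σ • B) := by
  rw [Matrix.mul_sub, Matrix.mul_smul, hCA, hCM, zero_sub]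

theorem add_smul_mul_eq (c : R) (hAC : A * C = 0) (hMC : M * C = Bᵀ) :
    (A + c • M) * C = c • Bᵀ := by
  rw [Matrix.add_mul, Matrix.smul_mul, hAC, hMC, zero_add]

variable [Fintype κ] [DecidableEq ι] [DecidableEq κ]

theorem inv_mul_one_sub_mul_add_mul_inv_mul (σ η : R) (hAC : A * C = 0) (hMC : M * C = Bᵀ)
    (hCA : Cᵀ * A = 0) (hCM : Cᵀ * M = B) (hX : IsUnit (A + (η - σ) • M)) :
    (A + (η - σ) • M)⁻¹ * (1 - Bᵀ * (B * C)⁻¹ * Cᵀ) * (A - σ • M) + C * (B * C)⁻¹ * B =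
      (A + (η - σ) • M)⁻¹ * (A + η • (Bᵀ * (B * C)⁻¹ * B) - σ • M) := by
  set X := A + (η - σ) • M
  set L := B * C
  have hXX : X⁻¹ * X = 1 := nonsing_inv_mul X ((isUnit_iff_isUnit_det X).mp hX)
  have hcorr : C * L⁻¹ * B = X⁻¹ * ((η - σ) • (Bᵀ * L⁻¹ * B)) := by
    calc C * L⁻¹ * B = X⁻¹ * (X * C) * L⁻¹ * B := by
          rw [← Matrix.mul_assoc, hXX, Matrix.one_mul]
      _ = X⁻¹ * ((η - σ) • (Bᵀ * L⁻¹ * B)) := by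
          rw [add_smul_mul_eq (η - σ) hAC hMC, Matrix.mul_smul, Matrix.smul_mul, Matrix.smul_mul,
            Matrix.mul_smul, Matrix.mul_assoc, Matrix.mul_assoc, Matrix.mul_assoc]
  have hproj : (1 - Bᵀ * L⁻¹ * Cᵀ) * (A - σ • M) = A - σ • M + σ • (Bᵀ * L⁻¹ * B) := by
    rw [Matrix.sub_mul, Matrix.one_mul, Matrix.mul_assoc, transpose_mul_sub_smul σ hCA hCM,
      Matrix.mul_neg, Matrix.mul_smul, Matrix.mul_assoc]
    abel
  rw [hcorr, Matrix.mul_assoc, ← Matrix.mul_add, hproj]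
  congr 1
  module

theorem fromBlocks_mul_fromBlocks_saddlePoint (σ η : R) (hAC : A * C = 0) (hMC : M * C = Bᵀ)
    (hCA : Cᵀ * A = 0) (hCM : Cᵀ * M = B) (hL : IsUnit (B * C))
    (hX : IsUnit (A + (η - σ) • M)) :
    fromBlocks ((A + (η - σ) • M)⁻¹ * (1 - Bᵀ * (B * C)⁻¹ * Cᵀ)) (C * (B * C)⁻¹)
        ((B * C)⁻¹ * Cᵀ) (σ • (B * C)⁻¹) * fromBlocks (A - σ • M) Bᵀ B 0 =
      fromBlocks ((A + (η - σ) • M)⁻¹ * (A + η • (Bᵀ * (B * C)⁻¹ * B) - σ • M)) 0 0 1 := by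
  have hLL : (B * C)⁻¹ * (B * C) = 1 := nonsing_inv_mul _ ((isUnit_iff_isUnit_det _).mp hL)
  have hCB := transpose_mul_transpose_eq_mul_s10 hMC hCM
  rw [fromBlocks_multiply, inv_mul_one_sub_mul_add_mul_inv_mul σ η hAC hMC hCA hCM hX]
  congr 1
  · rw [Matrix.mul_zero, add_zero, Matrix.mul_assoc, Matrix.sub_mul, Matrix.one_mul,
      Matrix.mul_assoc (Bᵀ * _), hCB, Matrix.mul_assoc Bᵀ, hLL, Matrix.mul_one, sub_self,
      Matrix.mul_zero]
  · rw [Matrix.mul_assoc, transpose_mul_sub_smul σ hCA hCM, Matrix.smul_mul, Matrix.mul_neg,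
      Matrix.mul_smul, neg_add_cancel]
  · rw [Matrix.mul_zero, add_zero, Matrix.mul_assoc, hCB, hLL]

end Matrix

theorem stmt10_general {n m : ℕ} (k η : ℝ)
    (A M : Matrix (Fin n) (Fin n) ℝ) (B : Matrix (Fin m) (Fin n) ℝ)
    (C : Matrix (Fin n) (Fin m) ℝ)
    (hA : Aᵀ = A) (hM : Mᵀ = M)
    (hAC : A * C = 0) (hMC : M * C = Bᵀ)
    (hL : IsUnit (B * C))
    (hInv : IsUnit (A + (η - k ^ 2) • M)) :
    (Matrix.fromBlocks
        ((A + (η - k ^ 2) • M)⁻¹ * (1 - Bᵀ * (B * C)⁻¹ * Cᵀ))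
        (C * (B * C)⁻¹) ((B * C)⁻¹ * Cᵀ) (k ^ 2 • (B * C)⁻¹)) *
      (Matrix.fromBlocks (A - k ^ 2 • M) Bᵀ B 0) =
    Matrix.fromBlocks
      ((A + (η - k ^ 2) • M)⁻¹ * (A + η • (Bᵀ * (B * C)⁻¹ * B) - k ^ 2 • M))
      0 0 (1 : Matrix (Fin m) (Fin m) ℝ) := by
  have hCA : Cᵀ * A = 0 := by
    rw [transpose_mul_eq_of_mul_eq hA hAC, transpose_zero]
  have hCM : Cᵀ * M = B := by
    rw [transpose_mul_eq_of_mul_eq hM hMC, transpose_transpose]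
  exact fromBlocks_mul_fromBlocks_saddlePoint (k ^ 2) η hAC hMC hCA hCM hL hInv

theorem stmt10 {n m : ℕ} (hn : 0 < n) (hm : 0 < m) (k η : ℝ)
    (A M : Matrix (Fin n) (Fin n) ℝ) (B : Matrix (Fin m) (Fin n) ℝ)
    (C : Matrix (Fin n) (Fin m) ℝ)
    (hA : Aᵀ = A) (hM : Mᵀ = M)
    (hAC : A * C = 0) (hMC : M * C = Bᵀ)
    (hL : IsUnit (B * C))
    (hInv : IsUnit (A + (η - k ^ 2) • M)) :
    (Matrix.fromBlocks
        ((A + (η - k ^ 2) • M)⁻¹ * (1 - Bᵀ * (B * C)⁻¹ * Cᵀ))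
        (C * (B * C)⁻¹) ((B * C)⁻¹ * Cᵀ) (k ^ 2 • (B * C)⁻¹)) *
      (Matrix.fromBlocks (A - k ^ 2 • M) Bᵀ B 0) =
    Matrix.fromBlocks
      ((A + (η - k ^ 2) • M)⁻¹ * (A + η • (Bᵀ * (B * C)⁻¹ * B) - k ^ 2 • M))
      0 0 (1 : Matrix (Fin m) (Fin m) ℝ) :=
  stmt10_general k η A M B C hA hM hAC hMC hL hInv
end

section
/- Let A be an n×n symmetric positive semidefinite real matrix, M an n×n symmetric positive definite real matrix, B an m×n real matrix and C an n×m real matrix with A·C = 0, M·C = Bᵀ, L := B·C invertible, and A − k²·M invertible for a real number k. Assume the column space of C equals the kernel of A and that ker(A) + ker(B) = ℝ^n. Then for every real η > k², the block matrix [[(A + (η − k²)·M)⁻¹·(I − Bᵀ·L⁻¹·Cᵀ), C·L⁻¹],[L⁻¹·Cᵀ, k²·L⁻¹]] is invertible. -/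
/-!
Since `L = B C` is invertible, so is the lower-right block `k² L⁻¹` (note `k ≠ 0`, as `k = 0` would
make `A` invertible and hence `C = 0`). Its Schur complement is, with `S = A + (η - k²) M` and
`Q = Bᵀ L⁻¹ Cᵀ`, equal to `S⁻¹ (1 - (η / k²) Q)`, because `S C = (η - k²) Bᵀ`. Now `S` is positive
definite, and `Q` is idempotent because `L` is symmetric, so `1 - λ Q` is invertible for `λ ≠ 1`.
-/

open Matrix

theorem IsIdempotentElem.isUnit_one_sub_smul_s11 {K R : Type*} [Field K] [Ring R] [Algebra K R]
    {p : R} (hp : IsIdempotentElem p) {c : K} (hc : c ≠ 1) : IsUnit (1 - c • p) := by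
  have hc' : 1 - c ≠ 0 := sub_ne_zero.2 hc.symm
  have key : c / (1 - c) - c - c * (c / (1 - c)) = 0 := by field_simp; ring
  refine isUnit_iff_exists.2 ⟨1 + (c / (1 - c)) • p, ?_, ?_⟩
  · calc (1 - c • p) * (1 + (c / (1 - c)) • p)
        = 1 + (c / (1 - c) - c - c * (c / (1 - c))) • p := by
          simp only [sub_mul, mul_add, one_mul, mul_one, smul_mul_smul_comm, hp.eq, sub_smul,
            mul_smul]
          abel
      _ = 1 := by rw [key, zero_smul, add_zero]
  · calc (1 + (c / (1 - c)) • p) * (1 - c • p)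
        = 1 + (c / (1 - c) - c - c * (c / (1 - c))) • p := by
          simp only [add_mul, mul_sub, one_mul, mul_one, smul_mul_smul_comm, hp.eq, sub_smul,
            mul_smul, mul_comm (c / (1 - c)) c]
          abel
      _ = 1 := by rw [key, zero_smul, add_zero]

namespace Matrix

theorem isSymm_mul_of_mul_eq_transpose_s11 {n m R : Type*} [Fintype n] [CommSemiring R]
    {M : Matrix n n R} {B : Matrix m n R} {C : Matrix n m R} (hM : M.IsSymm) (hMC : M * C = Bᵀ) :
    (B * C).IsSymm := by
  have hB : B = Cᵀ * M := by rw [← transpose_transpose B, ← hMC, transpose_mul, hM.eq]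
  rw [IsSymm, hB, transpose_mul, transpose_mul, hM.eq, transpose_transpose, Matrix.mul_assoc]

variable {n m K : Type*} [Fintype n] [Fintype m] [DecidableEq m] [Field K]

theorem isIdempotentElem_mul_nonsing_inv_mul {L : Matrix m m K} (hL : IsUnit L)
    {P : Matrix n m K} {D : Matrix m n K} (hDP : D * P = L) :
    IsIdempotentElem (P * L⁻¹ * D) := by
  have hLL : L⁻¹ * L = 1 := nonsing_inv_mul L ((isUnit_iff_isUnit_det L).1 hL)
  calc P * L⁻¹ * D * (P * L⁻¹ * D) = P * (L⁻¹ * (D * P)) * L⁻¹ * D := by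
        simp only [Matrix.mul_assoc]
    _ = P * L⁻¹ * D := by rw [hDP, hLL, Matrix.mul_one]

/-- The Schur complement of `c • L⁻¹` is `S⁻¹ * (1 - (1 + t / c) • (P * L⁻¹ * D))`. -/
theorem isUnit_fromBlocks_iff_of_mul_eq_smul [DecidableEq n] {S : Matrix n n K} (hS : IsUnit S)
    {L : Matrix m m K} (hL : IsUnit L) {P C : Matrix n m K} {D : Matrix m n K} {t c : K}
    (hc : c ≠ 0) (hSC : S * C = t • P) :
    IsUnit (fromBlocks (S⁻¹ * (1 - P * L⁻¹ * D)) (C * L⁻¹) (L⁻¹ * D) (c • L⁻¹)) ↔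
      IsUnit (1 - (1 + t / c) • (P * L⁻¹ * D)) := by
  have hLL : L⁻¹ * L = 1 := nonsing_inv_mul L ((isUnit_iff_isUnit_det L).1 hL)
  have hLL' : L * L⁻¹ = 1 := mul_nonsing_inv L ((isUnit_iff_isUnit_det L).1 hL)
  have hC : C = t • (S⁻¹ * P) := by
    rw [← Matrix.mul_smul, ← hSC,
      nonsing_inv_mul_cancel_left (A := S) C ((isUnit_iff_isUnit_det S).1 hS)]
  let : Invertible (c • L⁻¹) :=
    ⟨c⁻¹ • L, by rw [smul_mul_smul_comm, hLL', inv_mul_cancel₀ hc, one_smul],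
      by rw [smul_mul_smul_comm, hLL, mul_inv_cancel₀ hc, one_smul]⟩
  have hschur : S⁻¹ * (1 - P * L⁻¹ * D) - C * L⁻¹ * ⅟(c • L⁻¹) * (L⁻¹ * D) =
      S⁻¹ * (1 - (1 + t / c) • (P * L⁻¹ * D)) := by
    have hCLD : C * L⁻¹ * ⅟(c • L⁻¹) * (L⁻¹ * D) = c⁻¹ • (C * L⁻¹ * D) := by
      change C * L⁻¹ * (c⁻¹ • L) * (L⁻¹ * D) = _
      rw [Matrix.mul_smul, Matrix.smul_mul, Matrix.mul_assoc (C * L⁻¹), ← Matrix.mul_assoc L,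
        hLL', Matrix.one_mul, Matrix.mul_assoc]
    rw [hCLD, hC, add_smul, one_smul, div_eq_mul_inv, mul_comm, mul_smul]
    simp only [smul_mul, Matrix.mul_sub, Matrix.mul_add, Matrix.mul_smul, Matrix.mul_assoc,
      sub_sub]
  rw [isUnit_fromBlocks_iff_of_invertible₂₂, hschur,
    (isUnit_nonsing_inv_iff.2 hS).mul_left_iff]

end Matrix

theorem stmt11_general {n m : ℕ} (hm : 0 < m) (k η : ℝ)
    (A M : Matrix (Fin n) (Fin n) ℝ) (B : Matrix (Fin m) (Fin n) ℝ)
    (C : Matrix (Fin n) (Fin m) ℝ)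
    (hA : A.PosSemidef) (hM : M.PosDef)
    (hAC : A * C = 0) (hMC : M * C = Bᵀ)
    (hL : IsUnit (B * C))
    (hK : IsUnit (A - k ^ 2 • M))
    (hη : k ^ 2 < η) :
    IsUnit (Matrix.fromBlocks
      ((A + (η - k ^ 2) • M)⁻¹ * (1 - Bᵀ * (B * C)⁻¹ * Cᵀ))
      (C * (B * C)⁻¹) ((B * C)⁻¹ * Cᵀ) (k ^ 2 • (B * C)⁻¹)) := by
  have : Nonempty (Fin m) := ⟨⟨0, hm⟩⟩
  have hk : k ≠ 0 := by
    rintro rfl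
    have hAdet : IsUnit A.det := (isUnit_iff_isUnit_det A).1 (by simpa using hK)
    have hC : C = 0 := by
      rw [← nonsing_inv_mul_cancel_left (A := A) C hAdet, hAC, Matrix.mul_zero]
    simp [hC] at hL
  have hS : IsUnit (A + (η - k ^ 2) • M) :=
    (PosDef.posSemidef_add hA (hM.smul (sub_pos.2 hη))).isUnit
  have hSC : (A + (η - k ^ 2) • M) * C = (η - k ^ 2) • Bᵀ := by
    rw [Matrix.add_mul, hAC, smul_mul, hMC, zero_add]
  have hCB : Cᵀ * Bᵀ = B * C := by
    rw [← transpose_mul, (isSymm_mul_of_mul_eq_transpose_s11 (isHermitian_iff_isSymm.1 hM.1) hMC).eq]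
  rw [isUnit_fromBlocks_iff_of_mul_eq_smul hS hL (pow_ne_zero 2 hk) hSC]
  exact (isIdempotentElem_mul_nonsing_inv_mul hL hCB).isUnit_one_sub_smul_s11
    (lt_add_of_pos_right 1 (div_pos (sub_pos.2 hη) (by positivity))).ne'

theorem stmt11 {n m : ℕ} (hn : 0 < n) (hm : 0 < m) (k η : ℝ)
    (A M : Matrix (Fin n) (Fin n) ℝ) (B : Matrix (Fin m) (Fin n) ℝ)
    (C : Matrix (Fin n) (Fin m) ℝ)
    (hA : A.PosSemidef) (hM : M.PosDef)
    (hAC : A * C = 0) (hMC : M * C = Bᵀ)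
    (hL : IsUnit (B * C))
    (hK : IsUnit (A - k ^ 2 • M))
    (hrange : LinearMap.range C.mulVecLin = LinearMap.ker A.mulVecLin)
    (hsum : LinearMap.ker A.mulVecLin ⊔ LinearMap.ker B.mulVecLin = ⊤)
    (hη : k ^ 2 < η) :
    IsUnit (Matrix.fromBlocks
      ((A + (η - k ^ 2) • M)⁻¹ * (1 - Bᵀ * (B * C)⁻¹ * Cᵀ))
      (C * (B * C)⁻¹) ((B * C)⁻¹ * Cᵀ) (k ^ 2 • (B * C)⁻¹)) :=
  stmt11_general hm k η A M B C hA hM hAC hMC hL hK hη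
end

section
/- Let A be an n×n symmetric real matrix, M an n×n symmetric positive definite real matrix, B an m×n real matrix and C an n×m real matrix with A·C = 0, M·C = Bᵀ, L := B·C invertible, the column space of C equal to the kernel of A, and ker(A) + ker(B) = ℝ^n. Suppose there is a real constant ᾱ > 0 such that uᵀ·A·u ≥ ᾱ·uᵀ·M·u for all u ∈ ℝ^n with B·u = 0. Then for all real numbers k and η with η > k² and k² < ᾱ, the matrix A + η·Bᵀ·L⁻¹·B − k²·M is symmetric positive definite. -/
open Matrix

/-!
Write `x = C y + b` with `C y ∈ ker A` and `B b = 0`. Since `M C = Bᵀ`, the two parts are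
`M`-orthogonal and `L = Cᵀ M C`, so `xᵀ Bᵀ L⁻¹ B x = (C y)ᵀ M (C y)` while `xᵀ A x = bᵀ A b`. The
quadratic form of `A + η Bᵀ L⁻¹ B - k² M` at `x` is therefore
`(bᵀ A b - k² bᵀ M b) + (η - k²) (C y)ᵀ M (C y)`, and coercivity of `A` on `ker B` bounds the first
term below by `(ᾱ - k²) bᵀ M b`.
-/

namespace Matrix

variable {ι κ α : Type*} [CommRing α]

theorem isSymm_transpose_mul_mul [Fintype κ] (B : Matrix κ ι α) {N : Matrix κ κ α}
    (hN : N.IsSymm) : (Bᵀ * N * B).IsSymm := by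
  rw [IsSymm, transpose_mul, transpose_mul, transpose_transpose, hN.eq, Matrix.mul_assoc]

theorem transpose_mul_eq_of_mul_eq_transpose_s12 [Fintype ι] {M : Matrix ι ι α} {B : Matrix κ ι α}
    {C : Matrix ι κ α} (hM : M.IsSymm) (hMC : M * C = Bᵀ) : Cᵀ * M = B := by
  rw [← hM.eq, ← transpose_mul, hMC, transpose_transpose]

variable [Fintype ι] [Fintype κ]

theorem add_dotProduct_mulVec_add_of_isSymm {A : Matrix ι ι α} (hA : A.IsSymm) (a b : ι → α) :
    (a + b) ⬝ᵥ (A *ᵥ (a + b)) = a ⬝ᵥ (A *ᵥ a) + 2 * (b ⬝ᵥ (A *ᵥ a)) + b ⬝ᵥ (A *ᵥ b) := by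
  have hcomm : a ⬝ᵥ (A *ᵥ b) = b ⬝ᵥ (A *ᵥ a) := by
    rw [← dotProduct_transpose_mulVec, hA.eq]
  rw [mulVec_add, dotProduct_add, add_dotProduct, add_dotProduct, hcomm]
  ring

theorem dotProduct_transpose_mul_mul_mulVec (B : Matrix κ ι α) (N : Matrix κ κ α) (x : ι → α) :
    x ⬝ᵥ ((Bᵀ * N * B) *ᵥ x) = (B *ᵥ x) ⬝ᵥ (N *ᵥ (B *ᵥ x)) := by
  rw [← mulVec_mulVec, ← mulVec_mulVec, dotProduct_transpose_mulVec, dotProduct_comm]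

variable {M : Matrix ι ι α} {B : Matrix κ ι α} {C : Matrix ι κ α}

theorem dotProduct_mulVec_mulVec_eq_zero (hMC : M * C = Bᵀ) {b : ι → α} (hb : B *ᵥ b = 0)
    (y : κ → α) : b ⬝ᵥ (M *ᵥ (C *ᵥ y)) = 0 := by
  rw [mulVec_mulVec, hMC, dotProduct_transpose_mulVec, hb, dotProduct_zero]

theorem dotProduct_transpose_mul_inv_mul_mulVec [DecidableEq κ] (hB : Cᵀ * M = B)
    (hL : IsUnit (B * C)) {b : ι → α} (hb : B *ᵥ b = 0) (y : κ → α) :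
    (C *ᵥ y + b) ⬝ᵥ ((Bᵀ * (B * C)⁻¹ * B) *ᵥ (C *ᵥ y + b)) = (C *ᵥ y) ⬝ᵥ (M *ᵥ (C *ᵥ y)) := by
  have hBx : B *ᵥ (C *ᵥ y + b) = (B * C) *ᵥ y := by
    rw [mulVec_add, hb, add_zero, mulVec_mulVec]
  rw [dotProduct_transpose_mul_mul_mulVec, hBx, mulVec_mulVec,
    nonsing_inv_mul _ ((isUnit_iff_isUnit_det _).mp hL), one_mulVec, ← hB,
    ← mulVec_mulVec, ← mulVec_mulVec, dotProduct_comm, dotProduct_transpose_mulVec, dotProduct_comm]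

theorem add_dotProduct_mulVec_add_eq [DecidableEq κ] {A : Matrix ι ι α} (hA : A.IsSymm)
    (hM : M.IsSymm) (hMC : M * C = Bᵀ) (hL : IsUnit (B * C)) {y : κ → α} {b : ι → α}
    (hAy : A *ᵥ (C *ᵥ y) = 0) (hb : B *ᵥ b = 0) (η c : α) :
    (C *ᵥ y + b) ⬝ᵥ ((A + η • (Bᵀ * (B * C)⁻¹ * B) - c • M) *ᵥ (C *ᵥ y + b)) =
      b ⬝ᵥ (A *ᵥ b) - c * (b ⬝ᵥ (M *ᵥ b)) + (η - c) * ((C *ᵥ y) ⬝ᵥ (M *ᵥ (C *ᵥ y))) := by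
  rw [sub_mulVec, add_mulVec, smul_mulVec, smul_mulVec, dotProduct_sub, dotProduct_add,
    dotProduct_smul, dotProduct_smul,
    dotProduct_transpose_mul_inv_mul_mulVec (transpose_mul_eq_of_mul_eq_transpose_s12 hM hMC) hL hb,
    add_dotProduct_mulVec_add_of_isSymm hA, add_dotProduct_mulVec_add_of_isSymm hM, hAy,
    dotProduct_mulVec_mulVec_eq_zero hMC hb]
  simp only [dotProduct_zero, smul_eq_mul]
  ring

theorem exists_mulVec_add_eq_of_sup_eq_top {A : Matrix ι ι α}
    (hrange : LinearMap.range C.mulVecLin = LinearMap.ker A.mulVecLin)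
    (hsum : LinearMap.ker A.mulVecLin ⊔ LinearMap.ker B.mulVecLin = ⊤) (x : ι → α) :
    ∃ y b, A *ᵥ (C *ᵥ y) = 0 ∧ B *ᵥ b = 0 ∧ C *ᵥ y + b = x := by
  obtain ⟨a, ha, b, hb, rfl⟩ := Submodule.mem_sup.mp (hsum ▸ Submodule.mem_top (x := x))
  obtain ⟨y, rfl⟩ : a ∈ LinearMap.range C.mulVecLin := hrange ▸ ha
  exact ⟨y, b, ha, hb, rfl⟩

end Matrix

theorem stmt12_general {n m : ℕ} (ᾱ : ℝ)
    (A M : Matrix (Fin n) (Fin n) ℝ) (B : Matrix (Fin m) (Fin n) ℝ)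
    (C : Matrix (Fin n) (Fin m) ℝ)
    (hA : Aᵀ = A) (hM : M.PosDef)
    (hMC : M * C = Bᵀ)
    (hL : IsUnit (B * C))
    (hrange : LinearMap.range C.mulVecLin = LinearMap.ker A.mulVecLin)
    (hsum : LinearMap.ker A.mulVecLin ⊔ LinearMap.ker B.mulVecLin = ⊤)
    (hcoer : ∀ u : Fin n → ℝ, B *ᵥ u = 0 →
      ᾱ * (u ⬝ᵥ (M *ᵥ u)) ≤ u ⬝ᵥ (A *ᵥ u)) :
    ∀ k η : ℝ, k ^ 2 < η → k ^ 2 < ᾱ →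
      (A + η • (Bᵀ * (B * C)⁻¹ * B) - k ^ 2 • M).PosDef := by
  intro k η hkη hkᾱ
  have hAsymm : A.IsSymm := hA
  have hMsymm : M.IsSymm := isHermitian_iff_isSymm.mp hM.1
  have hLsymm : (B * C).IsSymm :=
    transpose_mul_eq_of_mul_eq_transpose_s12 hMsymm hMC ▸ isSymm_transpose_mul_mul C hMsymm
  have hS : (A + η • (Bᵀ * (B * C)⁻¹ * B) - k ^ 2 • M).IsSymm :=
    ((hAsymm.add ((isSymm_transpose_mul_mul B hLsymm.inv).smul η)).sub (hMsymm.smul _))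
  refine .of_dotProduct_mulVec_pos (isHermitian_iff_isSymm.mpr hS) fun x hx => ?_
  obtain ⟨y, b, hAy, hb, rfl⟩ := exists_mulVec_add_eq_of_sup_eq_top hrange hsum x
  rw [star_trivial, add_dotProduct_mulVec_add_eq hAsymm hMsymm hMC hL hAy hb]
  have hyM : 0 ≤ (C *ᵥ y) ⬝ᵥ (M *ᵥ (C *ᵥ y)) := by
    simpa using hM.posSemidef.dotProduct_mulVec_nonneg (C *ᵥ y)
  have hbM : 0 ≤ b ⬝ᵥ (M *ᵥ b) := by simpa using hM.posSemidef.dotProduct_mulVec_nonneg b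
  have hpos : 0 < b ⬝ᵥ (M *ᵥ b) ∨ 0 < (C *ᵥ y) ⬝ᵥ (M *ᵥ (C *ᵥ y)) := by
    rcases eq_or_ne b 0 with rfl | hb0
    · exact .inr (by simpa using hM.dotProduct_mulVec_pos (by simpa using hx : C *ᵥ y ≠ 0))
    · exact .inl (by simpa using hM.dotProduct_mulVec_pos hb0)
  rcases hpos with h | h <;> nlinarith [hcoer b hb]

theorem stmt12 {n m : ℕ} (hn : 0 < n) (hm : 0 < m) (ᾱ : ℝ)
    (A M : Matrix (Fin n) (Fin n) ℝ) (B : Matrix (Fin m) (Fin n) ℝ)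
    (C : Matrix (Fin n) (Fin m) ℝ)
    (hA : Aᵀ = A) (hM : M.PosDef)
    (hAC : A * C = 0) (hMC : M * C = Bᵀ)
    (hL : IsUnit (B * C))
    (hrange : LinearMap.range C.mulVecLin = LinearMap.ker A.mulVecLin)
    (hsum : LinearMap.ker A.mulVecLin ⊔ LinearMap.ker B.mulVecLin = ⊤)
    (hᾱ : 0 < ᾱ)
    (hcoer : ∀ u : Fin n → ℝ, B *ᵥ u = 0 →
      ᾱ * (u ⬝ᵥ (M *ᵥ u)) ≤ u ⬝ᵥ (A *ᵥ u)) :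
    ∀ k η : ℝ, k ^ 2 < η → k ^ 2 < ᾱ →
      (A + η • (Bᵀ * (B * C)⁻¹ * B) - k ^ 2 • M).PosDef :=
  stmt12_general ᾱ A M B C hA hM hMC hL hrange hsum hcoer
end

section
/- Let A be an n×n real matrix, M an n×n real matrix, B an m×n real matrix and C an n×m real matrix with A·C = 0, M·C = Bᵀ, L := B·C invertible, and A + (η − k²)·M invertible for real numbers k and η. Then the matrix W := (A + (η − k²)·M)⁻¹·(A + η·Bᵀ·L⁻¹·B − k²·M) satisfies W·C = C; consequently, since the linear map x ↦ C·x is injective (because L = B·C is invertible), λ = 1 is an eigenvalue of W whose eigenspace {v ∈ ℝ^n : W·v = v} has dimension at least m. -/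
/-!
The columns of `C` are fixed by `W`: after multiplying by `C`, the term `A` vanishes, `M * C = Bᵀ`
and `Bᵀ (B C)⁻¹ B C = Bᵀ`, so the right factor of `W` acts on `C` exactly like
`A + (η - k²) M`, whose inverse is the left factor. Since `B C` is invertible, `(B C)⁻¹ B` is a
left inverse of `C`, so the column space of `C` is an `m`-dimensional subspace of the fixed space
of `W`.
-/

open Matrix

namespace Matrix

variable {R K : Type*} [CommRing R] [Field K] {ι κ : Type*} [Fintype ι]

theorem nonsing_inv_mul_mul_eq_of_mul_eq [DecidableEq ι] {P Q : Matrix ι ι R}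
    {C : Matrix ι κ R} (hP : IsUnit P) (h : Q * C = P * C) : P⁻¹ * Q * C = C := by
  rw [Matrix.mul_assoc, h, nonsing_inv_mul_cancel_left _ _ ((isUnit_iff_isUnit_det _).mp hP)]

variable [Fintype κ]

theorem transpose_mul_inv_mul_mul_eq [DecidableEq κ] {B : Matrix κ ι R} {C : Matrix ι κ R}
    (hL : IsUnit (B * C)) : Bᵀ * (B * C)⁻¹ * B * C = Bᵀ := by
  rw [Matrix.mul_assoc _ B C, nonsing_inv_mul_cancel_right _ _ ((isUnit_iff_isUnit_det _).mp hL)]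

theorem shifted_pencil_mul_eq [DecidableEq κ] {k η : R} {A M : Matrix ι ι R}
    {B : Matrix κ ι R} {C : Matrix ι κ R} (hAC : A * C = 0) (hMC : M * C = Bᵀ)
    (hL : IsUnit (B * C)) :
    (A + η • (Bᵀ * (B * C)⁻¹ * B) - k ^ 2 • M) * C = (A + (η - k ^ 2) • M) * C := by
  simp only [Matrix.sub_mul, Matrix.add_mul, Matrix.smul_mul, hAC, hMC,
    transpose_mul_inv_mul_mul_eq hL, sub_smul]
  abel

theorem mulVecLin_injective_of_isUnit_mul [DecidableEq κ] {B : Matrix κ ι R}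
    {C : Matrix ι κ R} (hL : IsUnit (B * C)) : Function.Injective C.mulVecLin := by
  refine Function.LeftInverse.injective (g := ((B * C)⁻¹ * B).mulVec) fun v => ?_
  rw [mulVecLin_apply, mulVec_mulVec, Matrix.mul_assoc,
    nonsing_inv_mul _ ((isUnit_iff_isUnit_det _).mp hL), one_mulVec]

theorem card_le_finrank_ker_mulVecLin_sub_id {W : Matrix ι ι K} {C : Matrix ι κ K}
    (hWC : W * C = C) (hC : Function.Injective C.mulVecLin) :
    Fintype.card κ ≤ Module.finrank K ↥(LinearMap.ker (W.mulVecLin - LinearMap.id)) := by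
  have hrange : LinearMap.range C.mulVecLin ≤ LinearMap.ker (W.mulVecLin - LinearMap.id) := by
    rintro _ ⟨v, rfl⟩
    simp only [LinearMap.mem_ker, LinearMap.sub_apply, LinearMap.id_apply, mulVecLin_apply,
      mulVec_mulVec, hWC, sub_self]
  calc Fintype.card κ = Module.finrank K (LinearMap.range C.mulVecLin) := by
        rw [LinearMap.finrank_range_of_inj hC, Module.finrank_fintype_fun_eq_card]
    _ ≤ _ := Submodule.finrank_mono hrange

end Matrix

theorem stmt14_general {n m : ℕ} (k η : ℝ)
    (A M : Matrix (Fin n) (Fin n) ℝ) (B : Matrix (Fin m) (Fin n) ℝ)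
    (C : Matrix (Fin n) (Fin m) ℝ)
    (hAC : A * C = 0) (hMC : M * C = Bᵀ)
    (hL : IsUnit (B * C))
    (hInv : IsUnit (A + (η - k ^ 2) • M))
    (W : Matrix (Fin n) (Fin n) ℝ)
    (hW : W = (A + (η - k ^ 2) • M)⁻¹ *
      (A + η • (Bᵀ * (B * C)⁻¹ * B) - k ^ 2 • M)) :
    W * C = C ∧
      m ≤ Module.finrank ℝ
        ↥(LinearMap.ker (W.mulVecLin - LinearMap.id)) := by
  have hWC : W * C = C :=
    hW ▸ nonsing_inv_mul_mul_eq_of_mul_eq hInv (shifted_pencil_mul_eq hAC hMC hL)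
  exact ⟨hWC, by
    simpa using card_le_finrank_ker_mulVecLin_sub_id hWC (mulVecLin_injective_of_isUnit_mul hL)⟩

theorem stmt14 {n m : ℕ} (hn : 0 < n) (hm : 0 < m) (k η : ℝ)
    (A M : Matrix (Fin n) (Fin n) ℝ) (B : Matrix (Fin m) (Fin n) ℝ)
    (C : Matrix (Fin n) (Fin m) ℝ)
    (hAC : A * C = 0) (hMC : M * C = Bᵀ)
    (hL : IsUnit (B * C))
    (hInv : IsUnit (A + (η - k ^ 2) • M))
    (W : Matrix (Fin n) (Fin n) ℝ)
    (hW : W = (A + (η - k ^ 2) • M)⁻¹ *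
      (A + η • (Bᵀ * (B * C)⁻¹ * B) - k ^ 2 • M)) :
    W * C = C ∧
      m ≤ Module.finrank ℝ
        ↥(LinearMap.ker (W.mulVecLin - LinearMap.id)) :=
  stmt14_general k η A M B C hAC hMC hL hInv W hW
end

section
/- Let A be an n×n symmetric real matrix, M an n×n symmetric real matrix, B an m×n real matrix and C an n×m real matrix with A·C = 0, M·C = Bᵀ, L := B·C invertible, and let η be a real number such that A + η·M is invertible. Then for any m×m real matrix D, the block matrix product [[(A + η·M)⁻¹·(I − Bᵀ·L⁻¹·Cᵀ) − C·L⁻¹·D·L⁻¹·Cᵀ, C·L⁻¹],[L⁻¹·Cᵀ, 0]] · [[A, Bᵀ],[B, D]] equals the block diagonal matrix [[(A + η·M)⁻¹·(A + η·Bᵀ·L⁻¹·B), 0],[0, I_m]]. -/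
/-!
Write `P = (A + η M)⁻¹` and `L = B C`. Symmetry of `A` and `M` turns `A C = 0` and `M C = Bᵀ`
into `Cᵀ A = 0` and `Cᵀ M = B`, hence `Cᵀ Bᵀ = Cᵀ M C = L`; and `(A + η M) C = η Bᵀ` gives
`P (η Bᵀ) = C`. With these four relations each block of the product collapses by direct expansion.
-/

open Matrix

namespace Matrix

theorem transpose_mul_of_transpose_eq_self {K ι κ : Type*} [CommRing K] [Fintype ι]
    {A : Matrix ι ι K} {C X : Matrix ι κ K} (hA : Aᵀ = A) (hAC : A * C = X) : Cᵀ * A = Xᵀ := by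
  rw [← hAC, transpose_mul, hA]

variable {K ι κ : Type*} [CommRing K] [Fintype ι] [DecidableEq ι] [Fintype κ] [DecidableEq κ]
  {A P : Matrix ι ι K} {B : Matrix κ ι K} {C : Matrix ι κ K} {D L : Matrix κ κ K}

theorem saddlePoint_topLeft (η : K) (hCA : Cᵀ * A = 0) (hPB : P * (η • Bᵀ) = C) :
    (P * (1 - Bᵀ * L⁻¹ * Cᵀ) - C * L⁻¹ * D * L⁻¹ * Cᵀ) * A + C * L⁻¹ * B =
      P * (A + η • (Bᵀ * L⁻¹ * B)) := by
  have hPBL : P * (η • (Bᵀ * (L⁻¹ * B))) = C * (L⁻¹ * B) := by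
    rw [← smul_mul, ← Matrix.mul_assoc, hPB]
  simp only [Matrix.sub_mul, Matrix.mul_sub, Matrix.one_mul, Matrix.mul_assoc, hCA,
    Matrix.mul_zero, sub_zero, Matrix.mul_add, hPBL]

theorem saddlePoint_topRight (hCB : Cᵀ * Bᵀ = L) (hL : IsUnit L) :
    (P * (1 - Bᵀ * L⁻¹ * Cᵀ) - C * L⁻¹ * D * L⁻¹ * Cᵀ) * Bᵀ + C * L⁻¹ * D = 0 := by
  have hLL : L⁻¹ * L = 1 := nonsing_inv_mul L ((isUnit_iff_isUnit_det L).mp hL)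
  simp only [Matrix.sub_mul, Matrix.mul_sub, Matrix.mul_assoc, hCB, hLL, Matrix.mul_one]
  abel

theorem fromBlocks_mul_saddlePoint (η : K) (hCA : Cᵀ * A = 0) (hCB : Cᵀ * Bᵀ = L)
    (hL : IsUnit L) (hPB : P * (η • Bᵀ) = C) :
    fromBlocks (P * (1 - Bᵀ * L⁻¹ * Cᵀ) - C * L⁻¹ * D * L⁻¹ * Cᵀ) (C * L⁻¹) (L⁻¹ * Cᵀ) 0 *
        fromBlocks A Bᵀ B D =
      fromBlocks (P * (A + η • (Bᵀ * L⁻¹ * B))) 0 0 1 := by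
  have hLL : L⁻¹ * L = 1 := nonsing_inv_mul L ((isUnit_iff_isUnit_det L).mp hL)
  rw [fromBlocks_multiply, saddlePoint_topLeft η hCA hPB, saddlePoint_topRight hCB hL]
  simp [Matrix.mul_assoc, hCA, hCB, hLL]

end Matrix

theorem stmt17_general {n m : ℕ} (η : ℝ)
    (A M : Matrix (Fin n) (Fin n) ℝ) (B : Matrix (Fin m) (Fin n) ℝ)
    (C : Matrix (Fin n) (Fin m) ℝ)
    (hA : Aᵀ = A) (hM : Mᵀ = M)
    (hAC : A * C = 0) (hMC : M * C = Bᵀ)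
    (hL : IsUnit (B * C))
    (hInv : IsUnit (A + η • M))
    (D : Matrix (Fin m) (Fin m) ℝ) :
    (Matrix.fromBlocks
        ((A + η • M)⁻¹ * (1 - Bᵀ * (B * C)⁻¹ * Cᵀ) -
          C * (B * C)⁻¹ * D * (B * C)⁻¹ * Cᵀ)
        (C * (B * C)⁻¹) ((B * C)⁻¹ * Cᵀ) 0) *
      (Matrix.fromBlocks A Bᵀ B D) =
    Matrix.fromBlocks
      ((A + η • M)⁻¹ * (A + η • (Bᵀ * (B * C)⁻¹ * B)))
      0 0 (1 : Matrix (Fin m) (Fin m) ℝ) := by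
  have hCA : Cᵀ * A = 0 := by
    rw [transpose_mul_of_transpose_eq_self hA hAC, transpose_zero]
  have hCM : Cᵀ * M = B := by
    rw [transpose_mul_of_transpose_eq_self hM hMC, transpose_transpose]
  have hCB : Cᵀ * Bᵀ = B * C := by
    rw [← hMC, ← Matrix.mul_assoc, hCM]
  have hPB : (A + η • M)⁻¹ * (η • Bᵀ) = C := by
    have hAMC : (A + η • M) * C = η • Bᵀ := by
      rw [Matrix.add_mul, hAC, smul_mul, hMC, zero_add]
    rw [← hAMC, nonsing_inv_mul_cancel_left _ _ ((isUnit_iff_isUnit_det _).mp hInv)]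
  exact fromBlocks_mul_saddlePoint η hCA hCB hL hPB

theorem stmt17 {n m : ℕ} (hn : 0 < n) (hm : 0 < m) (η : ℝ)
    (A M : Matrix (Fin n) (Fin n) ℝ) (B : Matrix (Fin m) (Fin n) ℝ)
    (C : Matrix (Fin n) (Fin m) ℝ)
    (hA : Aᵀ = A) (hM : Mᵀ = M)
    (hAC : A * C = 0) (hMC : M * C = Bᵀ)
    (hL : IsUnit (B * C))
    (hInv : IsUnit (A + η • M))
    (D : Matrix (Fin m) (Fin m) ℝ) :
    (Matrix.fromBlocks
        ((A + η • M)⁻¹ * (1 - Bᵀ * (B * C)⁻¹ * Cᵀ) -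
          C * (B * C)⁻¹ * D * (B * C)⁻¹ * Cᵀ)
        (C * (B * C)⁻¹) ((B * C)⁻¹ * Cᵀ) 0) *
      (Matrix.fromBlocks A Bᵀ B D) =
    Matrix.fromBlocks
      ((A + η • M)⁻¹ * (A + η • (Bᵀ * (B * C)⁻¹ * B)))
      0 0 (1 : Matrix (Fin m) (Fin m) ℝ) :=
  stmt17_general η A M B C hA hM hAC hMC hL hInv D
end

section
/- Let A be an m×n real matrix and C_l a k×m real matrix with C_l·A = 0, and suppose the column spaces of A and of C_lᵀ together span ℝ^m (the sum of the ranges of the linear maps x ↦ A·x and y ↦ C_lᵀ·y is all of ℝ^m). Let X be an n×m matrix satisfying the Moore–Penrose equations for A (X·A·X = X, A·X·A = A, (A·X)ᵀ = A·X, (X·A)ᵀ = X·A) and let Y be an m×k matrix satisfying the Moore–Penrose equations for C_l (Y·C_l·Y = Y, C_l·Y·C_l = C_l, (C_l·Y)ᵀ = C_l·Y, (Y·C_l)ᵀ = Y·C_l). Then I_m − A·X = Y·C_l. -/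
/-! The matrix `M = 1 - A X - Y Cl` kills the columns of `A`, because `A X A = A` and
`Cl A = 0`, and those of `Clᵀ`, because transposing `Cl Y Cl = Cl` and using `(Y Cl)ᵀ = Y Cl`
gives `Y Cl Clᵀ = Clᵀ`, while `A X Clᵀ = (A X)ᵀ Clᵀ = Xᵀ (Cl A)ᵀ = 0`. As these columns span
`ℝ^m`, `M = 0`. -/

open Matrix

namespace Matrix

variable {R : Type*} [CommRing R] {l m n p : Type*}

theorem eq_zero_of_mul_eq_zero_of_range_sup_eq_top [Fintype m] [Fintype n] [Fintype p]
    [DecidableEq m] {M : Matrix l m R} {A : Matrix m n R} {B : Matrix m p R}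
    (hMA : M * A = 0) (hMB : M * B = 0)
    (hAB : LinearMap.range A.mulVecLin ⊔ LinearMap.range B.mulVecLin = ⊤) : M = 0 := by
  have hker : LinearMap.ker M.mulVecLin = ⊤ := by
    refine top_le_iff.mp (hAB ▸ sup_le ?_ ?_) <;>
      rw [LinearMap.range_le_ker_iff, ← mulVecLin_mul] <;> simp [hMA, hMB]
  rw [LinearMap.ker_eq_top] at hker
  exact toLin'.injective (by simpa [toLin'_apply'] using hker)

theorem mul_mul_transpose_of_mul_mul_eq [Fintype m] [Fintype n] {C : Matrix n m R}
    {Y : Matrix m n R} (hY2 : C * Y * C = C) (hY4 : (Y * C)ᵀ = Y * C) : Y * C * Cᵀ = Cᵀ := by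
  simpa only [transpose_mul, hY4, Matrix.mul_assoc] using congrArg transpose hY2

theorem mul_mul_transpose_eq_zero [Fintype m] [Fintype n] {A : Matrix m n R}
    {X : Matrix n m R} {C : Matrix l m R} (hCA : C * A = 0) (hX3 : (A * X)ᵀ = A * X) :
    A * X * Cᵀ = 0 := by
  rw [← hX3, transpose_mul, Matrix.mul_assoc, ← transpose_mul, hCA, transpose_zero,
    Matrix.mul_zero]

end Matrix

theorem stmt18_general {m n k : ℕ}
    (A : Matrix (Fin m) (Fin n) ℝ) (Cl : Matrix (Fin k) (Fin m) ℝ)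
    (hClA : Cl * A = 0)
    (hspan : LinearMap.range A.mulVecLin ⊔ LinearMap.range (Clᵀ).mulVecLin = ⊤)
    (X : Matrix (Fin n) (Fin m) ℝ)
    (hX2 : A * X * A = A)
    (hX3 : (A * X)ᵀ = A * X)
    (Y : Matrix (Fin m) (Fin k) ℝ)
    (hY2 : Cl * Y * Cl = Cl)
    (hY4 : (Y * Cl)ᵀ = Y * Cl) :
    (1 : Matrix (Fin m) (Fin m) ℝ) - A * X = Y * Cl := by
  rw [← sub_eq_zero]
  refine eq_zero_of_mul_eq_zero_of_range_sup_eq_top ?_ ?_ hspan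
  · rw [Matrix.sub_mul, Matrix.sub_mul, Matrix.one_mul, hX2, Matrix.mul_assoc, hClA,
      Matrix.mul_zero, sub_self, sub_zero]
  · rw [Matrix.sub_mul, Matrix.sub_mul, Matrix.one_mul, mul_mul_transpose_eq_zero hClA hX3,
      mul_mul_transpose_of_mul_mul_eq hY2 hY4, sub_zero, sub_self]

theorem stmt18 {m n k : ℕ} (hm : 0 < m) (hn : 0 < n) (hk : 0 < k)
    (A : Matrix (Fin m) (Fin n) ℝ) (Cl : Matrix (Fin k) (Fin m) ℝ)
    (hClA : Cl * A = 0)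
    (hspan : LinearMap.range A.mulVecLin ⊔ LinearMap.range (Clᵀ).mulVecLin = ⊤)
    (X : Matrix (Fin n) (Fin m) ℝ)
    (hX1 : X * A * X = X) (hX2 : A * X * A = A)
    (hX3 : (A * X)ᵀ = A * X) (hX4 : (X * A)ᵀ = X * A)
    (Y : Matrix (Fin m) (Fin k) ℝ)
    (hY1 : Y * Cl * Y = Y) (hY2 : Cl * Y * Cl = Cl)
    (hY3 : (Cl * Y)ᵀ = Cl * Y) (hY4 : (Y * Cl)ᵀ = Y * Cl) :
    (1 : Matrix (Fin m) (Fin m) ℝ) - A * X = Y * Cl :=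
  stmt18_general A Cl hClA hspan X hX2 hX3 Y hY2 hY4
end

section
/- Let m, n, k, l be positive integers, and let A be an m×n real matrix, B an m×k real matrix, C an l×n real matrix and D an l×k real matrix such that the block matrix 𝒦 := [[A, B],[C, D]] induces a bijective linear map from ℝ^n × ℝ^k to ℝ^m × ℝ^l. Let C_l be a k×m real matrix of full row rank (the map x ↦ C_lᵀ·x from ℝ^k to ℝ^m is injective) with C_l·A = 0. Then the k×k matrix L_l := C_l·B is invertible. -/
/-!
A vector `y` with `y ᵥ* (Cl * B) = 0` makes `x := y ᵥ* Cl` a left null vector of the top block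
row `[A B]`, since `Cl * A = 0`. Padding `x` with zeros gives a left null vector of `𝒦`, which
must vanish because `𝒦` is surjective. Hence `y ᵥ* Cl = 0`, so `y = 0` by full row rank of `Cl`;
a square matrix over a field with injective `vecMul` is invertible.
-/

open Matrix

namespace Matrix

variable {R ι κ ι' κ' : Type*} [CommSemiring R] [Fintype ι] [Fintype κ]

theorem eq_zero_of_vecMul_eq_zero_of_surjective {M : Matrix ι κ R}
    (hM : Function.Surjective M.mulVec) {w : ι → R} (hw : w ᵥ* M = 0) : w = 0 :=
  dotProduct_eq_zero w fun u => by
    obtain ⟨v, rfl⟩ := hM u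
    rw [dotProduct_mulVec, hw, zero_dotProduct]

theorem eq_zero_of_vecMul_eq_zero_of_surjective_fromBlocks [Fintype ι'] [Fintype κ']
    {A : Matrix ι κ R} {B : Matrix ι κ' R} {C : Matrix ι' κ R} {D : Matrix ι' κ' R}
    (hK : Function.Surjective (fromBlocks A B C D).mulVec) {x : ι → R}
    (hA : x ᵥ* A = 0) (hB : x ᵥ* B = 0) : x = 0 := by
  have hpad : Sum.elim x 0 ᵥ* fromBlocks A B C D = 0 := by
    rw [vecMul_fromBlocks]
    simp [hA, hB]
  simpa using congrArg (· ∘ Sum.inl) (eq_zero_of_vecMul_eq_zero_of_surjective hK hpad)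

end Matrix

theorem stmt19_general {m n k l : ℕ}
    (A : Matrix (Fin m) (Fin n) ℝ) (B : Matrix (Fin m) (Fin k) ℝ)
    (C : Matrix (Fin l) (Fin n) ℝ) (D : Matrix (Fin l) (Fin k) ℝ)
    (hK : Function.Bijective (Matrix.fromBlocks A B C D).mulVecLin)
    (Cl : Matrix (Fin k) (Fin m) ℝ)
    (hfull : Function.Injective (Clᵀ).mulVecLin)
    (hClA : Cl * A = 0) :
    IsUnit (Cl * B) := by
  have hCl : Function.Injective Cl.vecMul := fun x y h =>
    hfull (by simpa only [mulVecLin_apply, mulVec_transpose] using h)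
  rw [← vecMul_injective_iff_isUnit, ← coe_vecMulLinear, injective_iff_map_eq_zero]
  intro y hy
  have hyCl : y ᵥ* Cl = 0 :=
    eq_zero_of_vecMul_eq_zero_of_surjective_fromBlocks hK.surjective
      (by rw [vecMul_vecMul, hClA, vecMul_zero]) (by rwa [vecMul_vecMul])
  exact hCl (hyCl.trans (zero_vecMul Cl).symm)

theorem stmt19 {m n k l : ℕ} (hm : 0 < m) (hn : 0 < n) (hk : 0 < k) (hl : 0 < l)
    (A : Matrix (Fin m) (Fin n) ℝ) (B : Matrix (Fin m) (Fin k) ℝ)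
    (C : Matrix (Fin l) (Fin n) ℝ) (D : Matrix (Fin l) (Fin k) ℝ)
    (hK : Function.Bijective (Matrix.fromBlocks A B C D).mulVecLin)
    (Cl : Matrix (Fin k) (Fin m) ℝ)
    (hfull : Function.Injective (Clᵀ).mulVecLin)
    (hClA : Cl * A = 0) :
    IsUnit (Cl * B) :=
  stmt19_general A B C D hK Cl hfull hClA
end
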